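/- arXiv:2407.13564 — 7 statements merged into one kernel-verified Lean document; each statement's English description precedes it below -/
import Mathlib

section
/- Under the same assumptions, if additionally the directed graph induced by W (with an edge from j to i when Wᵢⱼ > 0) is strongly connected and Wⱼⱼ > 0 for all j, then ‖J(x)‖_π = ‖x‖_π holds if and only if there exists ζ ∈ ℝ^d such that xⱼ = πⱼ ζ for all 1 ≤ j ≤ n. -/
/-!
With `yⱼ = xⱼ / πⱼ` and `mₖ = J(x)ₖ / πₖ`, the weights `Wₖⱼ πⱼ / πₖ` (over `j`) sum to one and
average the `yⱼ` to `mₖ`, so the variance identity, summed over `k` with the column sums of `W`,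
gives `‖x‖²_π - ‖J x‖²_π = ∑ₖ ∑ⱼ Wₖⱼ πⱼ ‖yⱼ - mₖ‖²`. Equality thus forces `yⱼ = mₖ` whenever
`Wₖⱼ > 0`; since `Wₖₖ > 0` this gives `yⱼ = yₖ` along every edge, and `y` is constant by strong
connectivity.
-/

open Finset

section

variable {ι E : Type*} [NormedAddCommGroup E] [InnerProductSpace ℝ E]

lemma sum_mul_norm_sub_sq_of_sum_smul_eq (s : Finset ι) (a : ι → ℝ) (y : ι → E) (c : E)
    (hc : ∑ i ∈ s, a i • y i = (∑ i ∈ s, a i) • c) :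
    ∑ i ∈ s, a i * ‖y i - c‖ ^ 2 = ∑ i ∈ s, a i * ‖y i‖ ^ 2 - (∑ i ∈ s, a i) * ‖c‖ ^ 2 := by
  have hinner : ∑ i ∈ s, a i * inner ℝ (y i) c = (∑ i ∈ s, a i) * ‖c‖ ^ 2 := by
    simp_rw [← real_inner_smul_left, ← sum_inner, hc, real_inner_smul_left,
      real_inner_self_eq_norm_sq]
  calc ∑ i ∈ s, a i * ‖y i - c‖ ^ 2
      = ∑ i ∈ s, (a i * ‖y i‖ ^ 2 - 2 * (a i * inner ℝ (y i) c) + a i * ‖c‖ ^ 2) := by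
        refine sum_congr rfl fun i _ => ?_
        rw [norm_sub_sq_real]; ring
    _ = ∑ i ∈ s, a i * ‖y i‖ ^ 2 - (∑ i ∈ s, a i) * ‖c‖ ^ 2 := by
        rw [sum_add_distrib, sum_sub_distrib, ← mul_sum, hinner, ← sum_mul]; ring

lemma mul_norm_inv_smul_sq (t : ℝ) (v : E) : t * ‖t⁻¹ • v‖ ^ 2 = t⁻¹ * ‖v‖ ^ 2 := by
  rw [norm_smul, mul_pow, norm_inv, Real.norm_eq_abs, inv_pow, sq_abs]
  rcases eq_or_ne t 0 with rfl | ht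
  · simp
  · field_simp

end

section Mixing

variable {ι E : Type*} [Fintype ι] [NormedAddCommGroup E]

noncomputable def mixing {M : Type*} [AddCommMonoid M] [Module ℝ M] (W : Matrix ι ι ℝ)
    (x : ι → M) (k : ι) : M :=
  ∑ j, W k j • x j

noncomputable def weightedNormSq (π : ι → ℝ) (x : ι → E) : ℝ := ∑ j, (1 / π j) * ‖x j‖ ^ 2

variable (W : Matrix ι ι ℝ) (π : ι → ℝ)

lemma weightedNormSq_nonneg (hπ : ∀ j, 0 ≤ π j) (x : ι → E) : 0 ≤ weightedNormSq π x :=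
  sum_nonneg fun j _ => mul_nonneg (one_div_nonneg.2 (hπ j)) (sq_nonneg _)

variable [InnerProductSpace ℝ E]

lemma weightedNormSq_sub_weightedNormSq_mixing (hW_col : ∀ j, ∑ k, W k j = 1)
    (hπ : ∀ j, π j ≠ 0) (hπ_eig : ∀ k, ∑ j, W k j * π j = π k) (x : ι → E) :
    weightedNormSq π x - weightedNormSq π (mixing W x)
      = ∑ k, ∑ j, W k j * π j * ‖(π j)⁻¹ • x j - (π k)⁻¹ • mixing W x k‖ ^ 2 := by
  have hrow : ∀ k, ∑ j, W k j * π j * ‖(π j)⁻¹ • x j - (π k)⁻¹ • mixing W x k‖ ^ 2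
      = ∑ j, W k j * (1 / π j * ‖x j‖ ^ 2) - 1 / π k * ‖mixing W x k‖ ^ 2 := by
    intro k
    have hmean : ∑ j, (W k j * π j) • (π j)⁻¹ • x j
        = (∑ j, W k j * π j) • (π k)⁻¹ • mixing W x k := by
      simp [hπ_eig, smul_smul, hπ, mixing]
    rw [sum_mul_norm_sub_sq_of_sum_smul_eq _ _ _ _ hmean, hπ_eig, mul_norm_inv_smul_sq]
    simp_rw [mul_assoc, mul_norm_inv_smul_sq, one_div]
  rw [sum_congr rfl fun k _ => hrow k, sum_sub_distrib, sum_comm, weightedNormSq,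
    weightedNormSq]
  simp_rw [← sum_mul, hW_col, one_mul]

lemma inv_smul_eq_of_weightedNormSq_mixing_eq (hW_nonneg : ∀ i j, 0 ≤ W i j)
    (hW_col : ∀ j, ∑ k, W k j = 1) (hπ : ∀ j, 0 < π j) (hπ_eig : ∀ k, ∑ j, W k j * π j = π k)
    (x : ι → E) (h : weightedNormSq π (mixing W x) = weightedNormSq π x) :
    ∀ k j, 0 < W k j → (π j)⁻¹ • x j = (π k)⁻¹ • mixing W x k := by
  intro k j hkj
  have hzero := weightedNormSq_sub_weightedNormSq_mixing W π hW_col (fun j => (hπ j).ne')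
    hπ_eig x
  rw [h, sub_self, eq_comm] at hzero
  have hnonneg : ∀ k j, 0 ≤ W k j * π j * ‖(π j)⁻¹ • x j - (π k)⁻¹ • mixing W x k‖ ^ 2 :=
    fun k j => by have := hW_nonneg k j; have := hπ j; positivity
  have hterm := (sum_eq_zero_iff_of_nonneg fun j _ => hnonneg k j).1
    ((sum_eq_zero_iff_of_nonneg fun k _ => sum_nonneg fun j _ => hnonneg k j).1 hzero k
      (mem_univ k)) j (mem_univ j)
  rw [mul_eq_zero, or_iff_right (mul_pos hkj (hπ j)).ne', sq_eq_zero_iff, norm_eq_zero,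
    sub_eq_zero] at hterm
  exact hterm

lemma mixing_eq_self_of_eq_smul (hπ_eig : ∀ k, ∑ j, W k j * π j = π k) (ζ : E) :
    mixing W (fun j => π j • ζ) = fun j => π j • ζ := by
  ext k
  simp_rw [mixing, smul_smul, ← sum_smul, hπ_eig]

end Mixing

theorem stmt_5_general {n d : ℕ} (W : Matrix (Fin n) (Fin n) ℝ) (π : Fin n → ℝ)
    (hW_nonneg : ∀ i j, 0 ≤ W i j)
    (hW_col : ∀ j, ∑ k, W k j = 1)
    (hW_diag : ∀ j, 0 < W j j)
    (hW_conn : ∀ i j : Fin n, Relation.ReflTransGen (fun a b => 0 < W b a) i j)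
    (hπ_pos : ∀ j, 0 < π j)
    (hπ_eig : ∀ k, ∑ j, W k j * π j = π k) :
    ∀ x : Fin n → EuclideanSpace ℝ (Fin d),
      (Real.sqrt (∑ k, (1 / π k) * ‖∑ j, W k j • x j‖ ^ 2) =
          Real.sqrt (∑ j, (1 / π j) * ‖x j‖ ^ 2) ↔
        ∃ ζ : EuclideanSpace ℝ (Fin d), ∀ j, x j = π j • ζ) := by
  intro x
  change √(weightedNormSq π (mixing W x)) = √(weightedNormSq π x) ↔ _
  rw [Real.sqrt_inj (weightedNormSq_nonneg π (fun j => (hπ_pos j).le) _)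
    (weightedNormSq_nonneg π (fun j => (hπ_pos j).le) _)]
  constructor
  · intro h
    have hstep := inv_smul_eq_of_weightedNormSq_mixing_eq W π hW_nonneg hW_col hπ_pos hπ_eig x h
    have hedge : ∀ a b, 0 < W b a → (π a)⁻¹ • x a = (π b)⁻¹ • x b :=
      fun a b hba => (hstep b a hba).trans (hstep b b (hW_diag b)).symm
    have hconst : ∀ i j, (π i)⁻¹ • x i = (π j)⁻¹ • x j := fun i j => by
      simpa [Relation.reflTransGen_eq_self] using
        (hW_conn i j).lift (p := Eq) (fun a => (π a)⁻¹ • x a) hedge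
    rcases isEmpty_or_nonempty (Fin n) with _ | ⟨⟨i⟩⟩
    · exact ⟨0, isEmptyElim⟩
    · refine ⟨(π i)⁻¹ • x i, fun j => ?_⟩
      rw [← hconst j i, smul_smul, mul_inv_cancel₀ (hπ_pos j).ne', one_smul]
  · rintro ⟨ζ, hζ⟩
    obtain rfl : x = fun j => π j • ζ := funext hζ
    rw [mixing_eq_self_of_eq_smul W π hπ_eig]

theorem stmt_5 {n d : ℕ} (W : Matrix (Fin n) (Fin n) ℝ) (π : Fin n → ℝ)
    (hW_nonneg : ∀ i j, 0 ≤ W i j)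
    (hW_col : ∀ j, ∑ k, W k j = 1)
    (hW_diag : ∀ j, 0 < W j j)
    (hW_conn : ∀ i j : Fin n, Relation.ReflTransGen (fun a b => 0 < W b a) i j)
    (hπ_pos : ∀ j, 0 < π j)
    (hπ_sum : ∑ j, π j = 1)
    (hπ_eig : ∀ k, ∑ j, W k j * π j = π k) :
    ∀ x : Fin n → EuclideanSpace ℝ (Fin d),
      (Real.sqrt (∑ k, (1 / π k) * ‖∑ j, W k j • x j‖ ^ 2) =
          Real.sqrt (∑ j, (1 / π j) * ‖x j‖ ^ 2) ↔
        ∃ ζ : EuclideanSpace ℝ (Fin d), ∀ j, x j = π j • ζ) :=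
  stmt_5_general W π hW_nonneg hW_col hW_diag hW_conn hπ_pos hπ_eig
end

section
/- Suppose each fₖ: ℝ^d → ℝ is μₖ-strongly convex and Lₖ-smooth for 1 ≤ k ≤ n, and πₖ > 0. Then for any α ∈ (0, min_k (2nπₖ/(μₖ+Lₖ))], and all w, v ∈ (ℝ^d)^n, ‖w - v - α(∇F(w/(nπ)) - ∇F(v/(nπ)))‖_{π⊗1_d} ≤ (1 - Cα)‖w - v‖_{π⊗1_d}, where C = min_k μₖLₖ/(nπₖ(μₖ+Lₖ)), ∇F(w/(nπ)) = (∇f₁(w₁/(nπ₁)), …, ∇fₙ(wₙ/(nπₙ))), and ‖x‖_{π⊗1_d} = (Σₖ (1/πₖ)‖xₖ‖²)^{1/2}. -/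
/-!
Block `k` of the map is a gradient step for `fₖ` in the rescaled variable `wₖ / (nπₖ)`, with step
`α / (nπₖ) ≤ 2 / (μₖ + Lₖ)`. For a `μ`-strongly convex function with `L`-Lipschitz gradient, the
function `f - μ/2 ‖·‖²` is convex with an `(L - μ)`-quadratic upper bound, hence its gradient is
`1/(L - μ)`-cocoercive; expanded, this is
`‖∇f x - ∇f y‖² + μL ‖x - y‖² ≤ (μ + L) ⟪∇f x - ∇f y, x - y⟫`,
which makes a gradient step of size `β ≤ 2 / (μ + L)` a contraction with factor
`1 - β μL / (μ + L)`. So block `k` contracts by `1 - α μₖLₖ / (nπₖ(μₖ + Lₖ)) ≤ 1 - Cα`, and the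
weighted norm inherits the bound.
-/

open Set
open scoped RealInnerProductSpace NNReal

theorem one_sub_mul_div_mul_add_nonneg {μ L c α : ℝ} (hμ : 0 < μ) (hμL : μ ≤ L) (hc : 0 < c)
    (hα : α ≤ 2 * c / (μ + L)) : 0 ≤ 1 - α * (μ * L / (c * (μ + L))) := by
  have hL : 0 < L := hμ.trans_le hμL
  rw [sub_nonneg]
  calc α * (μ * L / (c * (μ + L))) ≤ 2 * c / (μ + L) * (μ * L / (c * (μ + L))) := by
        gcongr
    _ = 4 * μ * L / (μ + L) ^ 2 / 2 := by field_simp; ring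
    _ ≤ 1 := by
        rw [div_le_one two_pos, div_le_iff₀ (by positivity)]
        nlinarith [sq_nonneg (μ - L)]

section Gradient

variable {F : Type*} [NormedAddCommGroup F] [InnerProductSpace ℝ F] [CompleteSpace F]
  {f : F → ℝ} {f' : F → F}

theorem HasGradientAt.hasDerivAt_comp_add_smul {g x v : F} {t : ℝ}
    (h : HasGradientAt f g (x + t • v)) :
    HasDerivAt (fun s : ℝ => f (x + s • v)) ⟪g, v⟫ t := by
  have hline : HasDerivAt (fun s : ℝ => x + s • v) v t := by
    simpa using ((hasDerivAt_id t).smul_const v).const_add x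
  have := (hasGradientAt_iff_hasFDerivAt.mp h).comp_hasDerivAt t hline
  rwa [InnerProductSpace.toDual_apply_apply] at this

theorem HasGradientAt.sub_half_mul_norm_sq {g x : F} (h : HasGradientAt f g x) (μ : ℝ) :
    HasGradientAt (fun x => f x - μ / 2 * ‖x‖ ^ 2) (g - μ • x) x := by
  rw [hasGradientAt_iff_hasFDerivAt, map_sub] at *
  refine h.sub (((hasStrictFDerivAt_norm_sq x).hasFDerivAt.const_mul (μ / 2)).congr_fderiv ?_)
  ext v
  simp only [smul_apply, innerSL_apply_apply, nsmul_eq_mul, smul_eq_mul,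
    map_smul, InnerProductSpace.toDual_apply_apply]
  ring

theorem ConvexOn.add_inner_le_of_hasGradientAt (hconv : ConvexOn ℝ univ f) {g x : F}
    (hx : HasGradientAt f g x) (y : F) : f x + ⟪g, y - x⟫ ≤ f y := by
  have hline : ConvexOn ℝ univ (fun t : ℝ => f (x + t • (y - x))) := by
    simpa [Function.comp_def, AffineMap.lineMap_apply, add_comm] using
      hconv.comp_affineMap (AffineMap.lineMap x y)
  have hd : HasDerivAt (fun t : ℝ => f (x + t • (y - x))) ⟪g, y - x⟫ 0 :=
    HasGradientAt.hasDerivAt_comp_add_smul (by simpa using hx)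
  have := hline.le_slope_of_hasDerivAt (mem_univ 0) (mem_univ 1) one_pos hd
  simp only [slope_def_field, zero_smul, add_zero, one_smul, add_sub_cancel, sub_zero,
    div_one] at this
  linarith

theorem ConvexOn.inner_sub_nonneg_of_hasGradientAt (hconv : ConvexOn ℝ univ f) {g₁ g₂ x y : F}
    (hx : HasGradientAt f g₁ x) (hy : HasGradientAt f g₂ y) : 0 ≤ ⟪g₁ - g₂, x - y⟫ := by
  have h₁ := hconv.add_inner_le_of_hasGradientAt hx y
  have h₂ := hconv.add_inner_le_of_hasGradientAt hy x
  rw [← neg_sub x y, inner_neg_right] at h₁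
  rw [inner_sub_left]
  linarith

theorem le_add_inner_add_sq_of_lipschitzWith (hf : ∀ x, HasGradientAt f (f' x) x) {K : ℝ≥0}
    (hlip : LipschitzWith K f') (x y : F) :
    f y ≤ f x + ⟪f' x, y - x⟫ + K / 2 * ‖y - x‖ ^ 2 := by
  set v := y - x
  let ψ : ℝ → ℝ := fun t => f (x + t • v) - t * ⟪f' x, v⟫ - K / 2 * t ^ 2 * ‖v‖ ^ 2
  have hψ : ∀ t, HasDerivAt ψ (⟪f' (x + t • v) - f' x, v⟫ - K * t * ‖v‖ ^ 2) t := by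
    intro t
    refine ((((hf _).hasDerivAt_comp_add_smul).sub ((hasDerivAt_id t).mul_const _)).sub
      (((hasDerivAt_pow 2 t).const_mul (K / 2 : ℝ)).mul_const (‖v‖ ^ 2))).congr_deriv ?_
    rw [inner_sub_left]
    push_cast
    ring
  have hψ' : ∀ t ∈ interior (Icc (0 : ℝ) 1), deriv ψ t ≤ 0 := by
    intro t ht
    rw [interior_Icc] at ht
    rw [(hψ t).deriv, sub_nonpos]
    calc ⟪f' (x + t • v) - f' x, v⟫ ≤ ‖f' (x + t • v) - f' x‖ * ‖v‖ := real_inner_le_norm _ _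
      _ ≤ K * ‖t • v‖ * ‖v‖ := by
        gcongr
        simpa [dist_eq_norm] using hlip.dist_le_mul (x + t • v) x
      _ = K * t * ‖v‖ ^ 2 := by rw [norm_smul, Real.norm_of_nonneg ht.1.le]; ring
  have hanti : AntitoneOn ψ (Icc 0 1) :=
    antitoneOn_of_deriv_nonpos (convex_Icc 0 1)
      (fun t _ => (hψ t).continuousAt.continuousWithinAt)
      (fun t _ => (hψ t).differentiableAt.differentiableWithinAt) hψ'
  have h01 : ψ 1 ≤ ψ 0 :=
    hanti (left_mem_Icc.2 zero_le_one) (right_mem_Icc.2 zero_le_one) zero_le_one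
  simp only [ψ, v, zero_smul, one_smul, add_zero, add_sub_cancel, zero_mul, one_mul, one_pow,
    mul_one, sub_zero, ne_eq, OfNat.ofNat_ne_zero, not_false_eq_true, zero_pow, mul_zero] at h01
  linarith

section Cocoercive

variable (hf : ∀ x, HasGradientAt f (f' x) x) (hconv : ConvexOn ℝ univ f) {c : ℝ} (hc : 0 < c)
  (hdesc : ∀ x y, f y ≤ f x + ⟪f' x, y - x⟫ + c / 2 * ‖y - x‖ ^ 2)
include hf hconv hc hdesc

theorem ConvexOn.add_inner_add_norm_sub_sq_le (x y : F) :
    f x + ⟪f' x, y - x⟫ + ‖f' y - f' x‖ ^ 2 / (2 * c) ≤ f y := by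
  set g := f' y - f' x
  -- `z` minimizes the gap between the quadratic upper bound at `y` and the affine lower bound
  -- at `x`
  set z := y - c⁻¹ • g
  have h₁ := hconv.add_inner_le_of_hasGradientAt (hf x) z
  have h₂ := hdesc y z
  have hzx : z - x = (y - x) - c⁻¹ • g := by simp only [z]; abel
  have hzy : z - y = -(c⁻¹ • g) := by simp only [z]; abel
  rw [hzx, inner_sub_right, real_inner_smul_right] at h₁
  rw [hzy, inner_neg_right, real_inner_smul_right, norm_neg, norm_smul, mul_pow,
    Real.norm_eq_abs, sq_abs] at h₂
  have hg : ⟪f' y, g⟫ - ⟪f' x, g⟫ = ‖g‖ ^ 2 := by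
    rw [← inner_sub_left, real_inner_self_eq_norm_sq]
  have hcoef : c / 2 * (c⁻¹ ^ 2 * ‖g‖ ^ 2) = c⁻¹ * ‖g‖ ^ 2 - ‖g‖ ^ 2 / (2 * c) := by
    field_simp
    ring
  linear_combination h₁ + h₂ - c⁻¹ * hg + hcoef

theorem ConvexOn.norm_sub_sq_le_mul_inner (x y : F) :
    ‖f' x - f' y‖ ^ 2 ≤ c * ⟪f' x - f' y, x - y⟫ := by
  have h₁ := hconv.add_inner_add_norm_sub_sq_le hf hc hdesc x y
  have h₂ := hconv.add_inner_add_norm_sub_sq_le hf hc hdesc y x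
  rw [← neg_sub x y, inner_neg_right] at h₁
  rw [norm_sub_rev] at h₂
  have hhalf : ‖f' y - f' x‖ ^ 2 / c = 2 * (‖f' y - f' x‖ ^ 2 / (2 * c)) := by
    field_simp
  have hsum : ‖f' x - f' y‖ ^ 2 / c ≤ ⟪f' x - f' y, x - y⟫ := by
    rw [inner_sub_left, norm_sub_rev, hhalf]
    linarith
  rwa [div_le_iff₀' hc] at hsum

end Cocoercive

section StronglyConvex

variable (hf : ∀ x, HasGradientAt f (f' x) x) {μ : ℝ} {L : ℝ≥0} (hμL : μ ≤ L)
  (hsc : ConvexOn ℝ univ (fun x => f x - μ / 2 * ‖x‖ ^ 2)) (hlip : LipschitzWith L f')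
include hf hμL hsc hlip

theorem norm_sub_sq_add_mul_norm_sub_sq_le_inner (x y : F) :
    ‖f' x - f' y‖ ^ 2 + μ * L * ‖x - y‖ ^ 2 ≤ (μ + L) * ⟪f' x - f' y, x - y⟫ := by
  have hh : ∀ x, HasGradientAt (fun x => f x - μ / 2 * ‖x‖ ^ 2) (f' x - μ • x) x :=
    fun x => (hf x).sub_half_mul_norm_sq μ
  have hsub : (f' x - μ • x) - (f' y - μ • y) = (f' x - f' y) - μ • (x - y) := by
    rw [smul_sub]; abel
  have hinner : ⟪(f' x - f' y) - μ • (x - y), x - y⟫ =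
      ⟪f' x - f' y, x - y⟫ - μ * ‖x - y‖ ^ 2 := by
    rw [inner_sub_left, real_inner_smul_left, real_inner_self_eq_norm_sq]
  rcases hμL.lt_or_eq with hlt | rfl
  · have hdesc : ∀ a b, f b - μ / 2 * ‖b‖ ^ 2 ≤ f a - μ / 2 * ‖a‖ ^ 2 +
        ⟪f' a - μ • a, b - a⟫ + (L - μ) / 2 * ‖b - a‖ ^ 2 := by
      intro a b
      have hb : ‖b‖ ^ 2 = ‖a‖ ^ 2 + 2 * ⟪a, b - a⟫ + ‖b - a‖ ^ 2 := by
        simpa using norm_add_sq_real a (b - a)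
      rw [inner_sub_left, real_inner_smul_left]
      linear_combination le_add_inner_add_sq_of_lipschitzWith hf hlip a b - μ / 2 * hb
    have hco := hsc.norm_sub_sq_le_mul_inner hh (sub_pos.2 hlt) hdesc x y
    rw [hsub, hinner, norm_sub_sq_real, real_inner_smul_right, norm_smul, mul_pow,
      Real.norm_eq_abs, sq_abs] at hco
    linear_combination hco
  · have hmono := hsc.inner_sub_nonneg_of_hasGradientAt (hh x) (hh y)
    rw [hsub, hinner] at hmono
    have hbound : ‖f' x - f' y‖ ^ 2 ≤ (L * ‖x - y‖) ^ 2 := by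
      gcongr
      simpa [dist_eq_norm] using hlip.dist_le_mul x y
    nlinarith [mul_nonneg L.2 hmono]

theorem norm_sub_sub_smul_sub_le (hμ : 0 < μ) {β : ℝ} (hβ0 : 0 ≤ β) (hβ : β ≤ 2 / (μ + L))
    (x y : F) : ‖x - y - β • (f' x - f' y)‖ ≤ (1 - β * (μ * L / (μ + L))) * ‖x - y‖ := by
  have hS : 0 < μ + L := by positivity
  set κ := μ * L / (μ + L)
  set g := f' x - f' y
  set u := x - y
  have hinner : κ * ‖u‖ ^ 2 + ‖g‖ ^ 2 / (μ + L) ≤ ⟪g, u⟫ := by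
    have := norm_sub_sq_add_mul_norm_sub_sq_le_inner hf hμL hsc hlip x y
    rw [div_mul_eq_mul_div, ← add_div, div_le_iff₀ hS]
    linarith
  have hsq : ‖u - β • g‖ ^ 2 ≤ ((1 - β * κ) * ‖u‖) ^ 2 :=
    calc ‖u - β • g‖ ^ 2 = ‖u‖ ^ 2 - 2 * β * ⟪g, u⟫ + β ^ 2 * ‖g‖ ^ 2 := by
          rw [norm_sub_sq_real, real_inner_smul_right, norm_smul, mul_pow, Real.norm_eq_abs,
            sq_abs, real_inner_comm]
          ring
      _ ≤ (1 - 2 * β * κ) * ‖u‖ ^ 2 - β * (2 / (μ + L) - β) * ‖g‖ ^ 2 := by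
          linear_combination 2 * mul_le_mul_of_nonneg_left hinner hβ0
      _ ≤ (1 - 2 * β * κ) * ‖u‖ ^ 2 := by
          have : 0 ≤ β * (2 / (μ + L) - β) * ‖g‖ ^ 2 := by
            have := sub_nonneg.2 hβ
            positivity
          linarith
      _ ≤ ((1 - β * κ) * ‖u‖) ^ 2 := by nlinarith [sq_nonneg (β * κ * ‖u‖)]
  have hfactor : 0 ≤ 1 - β * κ := by
    simpa using one_sub_mul_div_mul_add_nonneg hμ hμL one_pos (by simpa using hβ)
  exact (pow_le_pow_iff_left₀ (norm_nonneg _) (by positivity) two_ne_zero).1 hsq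

theorem norm_sub_sub_smul_sub_comp_smul_le (hμ : 0 < μ) {c α : ℝ} (hc : 0 < c) (hα0 : 0 ≤ α)
    (hα : α ≤ 2 * c / (μ + L)) (w v : F) :
    ‖w - v - α • (f' ((1 / c) • w) - f' ((1 / c) • v))‖ ≤
      (1 - α * (μ * L / (c * (μ + L)))) * ‖w - v‖ := by
  have hβ : α / c ≤ 2 / (μ + L) :=
    calc α / c ≤ 2 * c / (μ + L) / c := by gcongr
      _ = 2 / (μ + L) := by field_simp
  have hrescale : w - v - α • (f' ((1 / c) • w) - f' ((1 / c) • v)) =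
      c • ((1 / c) • w - (1 / c) • v - (α / c) • (f' ((1 / c) • w) - f' ((1 / c) • v))) := by
    match_scalars <;> field_simp
  rw [hrescale, norm_smul, Real.norm_of_nonneg hc.le]
  calc c * ‖(1 / c) • w - (1 / c) • v - (α / c) • (f' ((1 / c) • w) - f' ((1 / c) • v))‖
      ≤ c * ((1 - α / c * (μ * L / (μ + L))) * ‖(1 / c) • w - (1 / c) • v‖) := by
        gcongr
        exact norm_sub_sub_smul_sub_le hf hμL hsc hlip hμ (by positivity) hβ _ _
    _ = (1 - α * (μ * L / (c * (μ + L)))) * ‖w - v‖ := by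
        rw [← smul_sub, norm_smul, Real.norm_of_nonneg (by positivity)]
        field_simp

end StronglyConvex

end Gradient

theorem sqrt_sum_mul_sq_le_mul_sqrt_sum {ι : Type*} [Fintype ι] {p a b : ι → ℝ} {r : ℝ}
    (hp : ∀ i, 0 ≤ p i) (ha : ∀ i, 0 ≤ a i) (hab : ∀ i, a i ≤ r * b i) (hr : 0 ≤ r) :
    √(∑ i, p i * a i ^ 2) ≤ r * √(∑ i, p i * b i ^ 2) := by
  rw [← Real.sqrt_sq hr, ← Real.sqrt_mul (sq_nonneg r), Finset.mul_sum]
  refine Real.sqrt_le_sqrt (Finset.sum_le_sum fun i _ => ?_)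
  calc p i * a i ^ 2 ≤ p i * (r * b i) ^ 2 := by
        have := hp i
        gcongr
        exacts [ha i, hab i]
    _ = r ^ 2 * (p i * b i ^ 2) := by ring

theorem stmt_6 {n d : ℕ} (hn : 0 < n)
    (f : Fin n → EuclideanSpace ℝ (Fin d) → ℝ)
    (μ L : Fin n → ℝ) (π : Fin n → ℝ) (α : ℝ)
    (hμ : ∀ k, 0 < μ k) (hμL : ∀ k, μ k ≤ L k)
    (hdiff : ∀ k, Differentiable ℝ (f k))
    (hsc : ∀ k, ConvexOn ℝ Set.univ (fun x => f k x - μ k / 2 * ‖x‖ ^ 2))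
    (hsm : ∀ k, LipschitzWith (L k).toNNReal (gradient (f k)))
    (hπ_pos : ∀ k, 0 < π k)
    (hα0 : 0 < α) (hα : α ≤ ⨅ k, 2 * n * π k / (μ k + L k)) :
    ∀ w v : Fin n → EuclideanSpace ℝ (Fin d),
      Real.sqrt (∑ k, (1 / π k) *
          ‖w k - v k - α • (gradient (f k) ((1 / (n * π k)) • w k) -
              gradient (f k) ((1 / (n * π k)) • v k))‖ ^ 2) ≤
        (1 - (⨅ k, μ k * L k / (n * π k * (μ k + L k))) * α) *
          Real.sqrt (∑ k, (1 / π k) * ‖w k - v k‖ ^ 2) := by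
  intro w v
  lift L to Fin n → ℝ≥0 using fun k => (hμ k).le.trans (hμL k)
  beta_reduce at hμL hα ⊢
  simp only [Real.toNNReal_coe] at hsm
  have hc : ∀ k, 0 < (n : ℝ) * π k := fun k => mul_pos (Nat.cast_pos.2 hn) (hπ_pos k)
  have hαk : ∀ k, α ≤ 2 * (n * π k) / (μ k + L k) := fun k =>
    (hα.trans (ciInf_le (finite_range _).bddBelow k)).trans_eq (by ring)
  have hC : ∀ k, (⨅ k, μ k * L k / (n * π k * (μ k + L k))) ≤ μ k * L k / (n * π k * (μ k + L k)) :=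
    fun k => ciInf_le (finite_range _).bddBelow k
  obtain ⟨k₀⟩ := Fin.pos_iff_nonempty.mp hn
  refine sqrt_sum_mul_sq_le_mul_sqrt_sum (fun k => (one_div_pos.2 (hπ_pos k)).le)
    (fun k => norm_nonneg _) (fun k => ?_) ?_
  · refine (norm_sub_sub_smul_sub_comp_smul_le (fun x => (hdiff k x).hasGradientAt) (hμL k)
      (hsc k) (hsm k) (hμ k) (hc k) hα0.le (hαk k) (w k) (v k)).trans ?_
    exact mul_le_mul_of_nonneg_right (by nlinarith [hC k]) (norm_nonneg _)
  · nlinarith [hC k₀, one_sub_mul_div_mul_add_nonneg (hμ k₀) (hμL k₀) (hc k₀) (hαk k₀)]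
end

section
/- Let each fₖ be μₖ-strongly convex and Lₖ-smooth, W column stochastic with right eigenvector π (positive entries, summing to 1, Wπ = π). Define T_α(w)ₖ = Σⱼ Wₖⱼ(wⱼ - α∇fⱼ(wⱼ/(nπⱼ))). Then for α ∈ (0, min_k 2nπₖ/(Lₖ+μₖ)], T_α is a contraction in ‖·‖_{π⊗1_d} with Lipschitz constant at most 1 - Cα, where C = min_k μₖLₖ/(nπₖ(μₖ+Lₖ)). -/
set_option maxHeartbeats 1000000

open Set Finset
open scoped RealInnerProductSpace

section Aux

variable {E : Type*} [NormedAddCommGroup E] [InnerProductSpace ℝ E] [CompleteSpace E]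

/-- derivative along a line -/
lemma line_hasDerivAt {f : E → ℝ} (hf : Differentiable ℝ f) (x d : E) (t : ℝ) :
    HasDerivAt (fun s : ℝ => f (x + s • d)) ⟪gradient f (x + t • d), d⟫ t := by
  have hc : HasDerivAt (fun s : ℝ => x + s • d) d t := by
    simpa using ((hasDerivAt_id t).smul_const d).const_add x
  have hg := (hf (x + t • d)).hasGradientAt.hasFDerivAt
  have := hg.comp_hasDerivAt t hc
  simpa [InnerProductSpace.toDual_apply_apply, Function.comp_def] using this

/-- first-order condition for convexity -/
lemma convex_first_order {f : E → ℝ} (hf : Differentiable ℝ f)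
    (hc : ConvexOn ℝ Set.univ f) (x z : E) :
    ⟪gradient f x, z - x⟫ ≤ f z - f x := by
  set g : ℝ → ℝ := fun t => f (x + t • (z - x)) with hg
  have hgc : ConvexOn ℝ Set.univ g := by
    have := hc.comp_affineMap (AffineMap.lineMap x z : ℝ →ᵃ[ℝ] E)
    rw [Set.preimage_univ] at this
    refine (congrArg (ConvexOn ℝ Set.univ) ?_).mpr this
    funext t
    simp [g, Function.comp, AffineMap.lineMap_apply, add_comm]
  have hder : HasDerivAt g ⟪gradient f x, z - x⟫ 0 := by
    have := line_hasDerivAt hf x (z - x) 0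
    simpa using this
  have := hgc.le_slope_of_hasDerivAt (Set.mem_univ (0:ℝ)) (Set.mem_univ (1:ℝ))
    one_pos hder
  simpa [slope, g] using this

/-- descent lemma -/
lemma descent_lemma {f : E → ℝ} (hf : Differentiable ℝ f) {L : ℝ} (hL : 0 ≤ L)
    (hsm : LipschitzWith L.toNNReal (gradient f)) (x z : E) :
    f z ≤ f x + ⟪gradient f x, z - x⟫ + L / 2 * ‖z - x‖ ^ 2 := by
  set d := z - x with hd
  set h : ℝ → ℝ := fun t => f (x + t • d) - t * ⟪gradient f x, d⟫ - L / 2 * t ^ 2 * ‖d‖ ^ 2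
    with hh
  have H : ∀ t : ℝ, HasDerivAt h
      (⟪gradient f (x + t • d), d⟫ - ⟪gradient f x, d⟫ - L / 2 * (2 * t) * ‖d‖ ^ 2) t := by
    intro t
    have h1 := line_hasDerivAt hf x d t
    have h2 : HasDerivAt (fun t : ℝ => t * ⟪gradient f x, d⟫) ⟪gradient f x, d⟫ t := by
      simpa using (hasDerivAt_id t).mul_const ⟪gradient f x, d⟫
    have h3 : HasDerivAt (fun t : ℝ => L / 2 * t ^ 2 * ‖d‖ ^ 2) (L / 2 * (2 * t) * ‖d‖ ^ 2) t := by
      have := ((hasDerivAt_pow 2 t).const_mul (L / 2)).mul_const (‖d‖ ^ 2)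
      simpa [mul_comm, mul_assoc, mul_left_comm] using this
    exact (h1.sub h2).sub h3
  have hanti : AntitoneOn h (Icc 0 1) := by
    apply antitoneOn_of_deriv_nonpos (convex_Icc 0 1)
    · exact fun t _ => ((H t).differentiableAt).continuousAt.continuousWithinAt
    · exact fun t _ => ((H t).differentiableAt).differentiableWithinAt
    · intro t ht
      rw [interior_Icc] at ht
      rw [(H t).deriv]
      have hgle : ⟪gradient f (x + t • d) - gradient f x, d⟫ ≤ L * t * ‖d‖ ^ 2 := by
        calc ⟪gradient f (x + t • d) - gradient f x, d⟫
            ≤ ‖gradient f (x + t • d) - gradient f x‖ * ‖d‖ := real_inner_le_norm _ _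
          _ ≤ (L * (t * ‖d‖)) * ‖d‖ := by
              apply mul_le_mul_of_nonneg_right _ (norm_nonneg d)
              have := hsm.dist_le_mul (x + t • d) x
              rw [dist_eq_norm, dist_eq_norm] at this
              simpa [Real.coe_toNNReal L hL, norm_smul, abs_of_pos ht.1] using this
          _ = L * t * ‖d‖ ^ 2 := by ring
      rw [inner_sub_left] at hgle
      nlinarith [hgle]
  have h10 := hanti (Set.left_mem_Icc.2 zero_le_one) (Set.right_mem_Icc.2 zero_le_one)
    zero_le_one
  simp only [hh, one_smul, one_pow, zero_smul, add_zero, zero_pow, zero_mul, mul_zero,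
    mul_one, sub_zero, hd] at h10
  rw [add_sub_cancel] at h10
  linarith [h10]

lemma grad_phi {f : E → ℝ} (hf : Differentiable ℝ f) (μ : ℝ) (p : E) :
    HasGradientAt (fun x => f x - μ / 2 * ‖x‖ ^ 2) (gradient f p - μ • p) p := by
  rw [hasGradientAt_iff_hasFDerivAt]
  have h1 : HasFDerivAt f (InnerProductSpace.toDual ℝ E (gradient f p)) p :=
    (hf p).hasGradientAt.hasFDerivAt
  have h2 : HasFDerivAt (fun x : E => μ / 2 * ‖x‖ ^ 2)
      ((InnerProductSpace.toDual ℝ E) (μ • p)) p := by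
    have hsq : HasFDerivAt (fun x : E => ⟪x, x⟫)
        ((fderivInnerCLM ℝ (p, p)).comp ((ContinuousLinearMap.id ℝ E).prod
          (ContinuousLinearMap.id ℝ E))) p :=
      (hasFDerivAt_id p).inner ℝ (hasFDerivAt_id p)
    have heq : (fun x : E => μ / 2 * ‖x‖ ^ 2) = fun x : E => μ / 2 * ⟪x, x⟫ := by
      funext x; rw [real_inner_self_eq_norm_sq]
    rw [heq]
    have := hsq.const_mul (μ / 2)
    refine this.congr_fderiv ?_
    ext v
    simp [fderivInnerCLM_apply, real_inner_comm p v, inner_smul_left]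
    ring
  have := h1.sub h2
  exact this.congr_fderiv (map_sub _ _ _).symm

/-- strong convexity + smoothness interpolation inequality -/
lemma interp_ineq {f : E → ℝ} {μ L : ℝ} (hμ : 0 < μ) (hμL : μ ≤ L)
    (hf : Differentiable ℝ f)
    (hsc : ConvexOn ℝ Set.univ (fun x => f x - μ / 2 * ‖x‖ ^ 2))
    (hsm : LipschitzWith L.toNNReal (gradient f)) (x y : E) :
    μ * L / (μ + L) * ‖x - y‖ ^ 2 + 1 / (μ + L) * ‖gradient f x - gradient f y‖ ^ 2
      ≤ ⟪gradient f x - gradient f y, x - y⟫ := by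
  have hL : 0 < L := hμ.trans_le hμL
  have hP : 0 < μ + L := by linarith
  set φ : E → ℝ := fun x => f x - μ / 2 * ‖x‖ ^ 2 with hφ
  have hφdiff : Differentiable ℝ φ := fun p => ((grad_phi hf μ p).differentiableAt)
  have hφgrad : ∀ p : E, gradient φ p = gradient f p - μ • p := fun p =>
    (grad_phi hf μ p).gradient
  -- descent lemma for φ with constant L - μ
  have hφdesc : ∀ a z : E, φ z ≤ φ a + ⟪gradient φ a, z - a⟫ + (L - μ) / 2 * ‖z - a‖ ^ 2 := by
    intro a z
    have hdf := descent_lemma hf hL.le hsm a z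
    have hzsq : ‖z‖ ^ 2 = ‖a‖ ^ 2 + 2 * ⟪a, z - a⟫ + ‖z - a‖ ^ 2 := by
      have := norm_add_sq_real a (z - a)
      simpa using this
    have hinner : ⟪gradient φ a, z - a⟫ = ⟪gradient f a, z - a⟫ - μ * ⟪a, z - a⟫ := by
      rw [hφgrad a, inner_sub_left, real_inner_smul_left]
    simp only [hφ]
    rw [hinner]
    nlinarith [hdf, hzsq]
  -- A-bound
  have hA : ∀ a b z : E, φ a + ⟪gradient φ a, z - a⟫ ≤
      φ b + ⟪gradient φ b, z - b⟫ + (L - μ) / 2 * ‖z - b‖ ^ 2 := by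
    intro a b z
    have h1 := convex_first_order hφdiff hsc a z
    have h2 := hφdesc b z
    simp only [hφ] at h1 h2 ⊢
    linarith
  clear_value φ
  clear hφ
  set G : E := gradient φ x - gradient φ y with hG
  set A : ℝ := φ y - φ x - ⟪gradient φ x, y - x⟫ with hAdef
  set B : ℝ := φ x - φ y - ⟪gradient φ y, x - y⟫ with hBdef
  clear_value G A B
  have hAB : A + B = ⟪G, x - y⟫ := by
    rw [hAdef, hBdef, hG, inner_sub_left]
    have h1 : ⟪gradient φ x, y - x⟫ = - ⟪gradient φ x, x - y⟫ := by
      rw [← inner_neg_right]; congr 1; abel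
    rw [h1]; ring
  have hker : ∀ t : ℝ, t * ‖G‖ ^ 2 ≤ A + (L - μ) / 2 * t ^ 2 * ‖G‖ ^ 2 := by
    intro t
    have := hA x y (y + t • G)
    have e1 : (y + t • G) - x = (y - x) + t • G := by abel
    have e2 : (y + t • G) - y = t • G := by abel
    rw [e1, e2, inner_add_right, real_inner_smul_right, real_inner_smul_right] at this
    have e3 : ⟪gradient φ x, G⟫ - ⟪gradient φ y, G⟫ = ‖G‖ ^ 2 := by
      rw [← inner_sub_left, ← hG, real_inner_self_eq_norm_sq]
    have e4 : ‖t • G‖ ^ 2 = t ^ 2 * ‖G‖ ^ 2 := by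
      rw [norm_smul, Real.norm_eq_abs, mul_pow, sq_abs]
    rw [e4] at this
    have e3' : t * ⟪gradient φ x, G⟫ = t * ⟪gradient φ y, G⟫ + t * ‖G‖ ^ 2 := by
      rw [← e3]; ring
    have hAdef' : A = φ y - φ x - ⟪gradient φ x, y - x⟫ := hAdef
    linarith only [this, e3', hAdef']
  have hker' : ∀ t : ℝ, t * ‖G‖ ^ 2 ≤ B + (L - μ) / 2 * t ^ 2 * ‖G‖ ^ 2 := by
    intro t
    have := hA y x (x + t • (-G))
    have e1 : (x + t • (-G)) - y = (x - y) + t • (-G) := by abel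
    have e2 : (x + t • (-G)) - x = t • (-G) := by abel
    rw [e1, e2, inner_add_right, real_inner_smul_right, real_inner_smul_right] at this
    have e3 : ⟪gradient φ y, -G⟫ - ⟪gradient φ x, -G⟫ = ‖G‖ ^ 2 := by
      rw [← inner_sub_left, ← neg_sub (gradient φ x), ← hG, inner_neg_neg,
        real_inner_self_eq_norm_sq]
    have e4 : ‖t • (-G)‖ ^ 2 = t ^ 2 * ‖G‖ ^ 2 := by
      rw [norm_smul, norm_neg, Real.norm_eq_abs, mul_pow, sq_abs]
    rw [e4] at this
    have e3' : t * ⟪gradient φ y, -G⟫ = t * ⟪gradient φ x, -G⟫ + t * ‖G‖ ^ 2 := by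
      rw [← e3]; ring
    have hBdef' : B = φ x - φ y - ⟪gradient φ y, x - y⟫ := hBdef
    linarith only [this, e3', hBdef']
  -- cocoercivity
  have hcoco : ‖G‖ ^ 2 ≤ (L - μ) * ⟪G, x - y⟫ := by
    rcases eq_or_lt_of_le hμL with heq | hlt
    · -- μ = L : show G = 0
      have hGz : ‖G‖ ^ 2 ≤ 0 := by
        by_contra hpos
        push_neg at hpos
        have h := hker ((A + 1) / ‖G‖ ^ 2)
        rw [div_mul_cancel₀ _ (ne_of_gt hpos)] at h
        rw [← heq] at h
        simp at h
        linarith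
      have hLμ : L - μ = 0 := by linarith [heq]
      rw [hLμ, zero_mul]
      exact hGz
    · have hK : 0 < L - μ := by linarith
      have h1 := hker (1 / (L - μ))
      have h2 := hker' (1 / (L - μ))
      have e : (L - μ) / 2 * (1 / (L - μ)) ^ 2 = 1 / (2 * (L - μ)) := by
        field_simp
      rw [e] at h1 h2
      have hsplit : 1 / (L - μ) * ‖G‖ ^ 2 - 1 / (2 * (L - μ)) * ‖G‖ ^ 2
          = ‖G‖ ^ 2 / (2 * (L - μ)) := by
        field_simp
        ring
      have hA' : ‖G‖ ^ 2 / (2 * (L - μ)) ≤ A := by linarith [h1, hsplit]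
      have hB' : ‖G‖ ^ 2 / (2 * (L - μ)) ≤ B := by linarith [h2, hsplit]
      have h2K : (0:ℝ) < 2 * (L - μ) := by linarith
      rw [div_le_iff₀ h2K] at hA' hB'
      have hsum : ‖G‖ ^ 2 ≤ (L - μ) * (A + B) := by nlinarith [hA', hB']
      rw [hAB] at hsum
      exact hsum
  -- conclude
  have hGeq : G = (gradient f x - gradient f y) - μ • (x - y) := by
    rw [hG, hφgrad x, hφgrad y, smul_sub]; abel
  set g : E := gradient f x - gradient f y with hg
  set D : E := x - y with hD
  have e1 : ‖G‖ ^ 2 = ‖g‖ ^ 2 - 2 * (μ * ⟪g, D⟫) + μ ^ 2 * ‖D‖ ^ 2 := by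
    rw [hGeq, norm_sub_sq_real, real_inner_smul_right]
    congr 2
    rw [norm_smul, Real.norm_eq_abs, mul_pow, sq_abs]
  have e2 : ⟪G, D⟫ = ⟪g, D⟫ - μ * ‖D‖ ^ 2 := by
    rw [hGeq, inner_sub_left, real_inner_smul_left, real_inner_self_eq_norm_sq]
  rw [e1, e2] at hcoco
  have key : ‖g‖ ^ 2 + μ * L * ‖D‖ ^ 2 ≤ (μ + L) * ⟪g, D⟫ := by nlinarith [hcoco]
  have : (μ * L * ‖D‖ ^ 2 + ‖g‖ ^ 2) / (μ + L) ≤ ⟪g, D⟫ := by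
    rw [div_le_iff₀ hP]
    nlinarith [key]
  calc μ * L / (μ + L) * ‖D‖ ^ 2 + 1 / (μ + L) * ‖g‖ ^ 2
      = (μ * L * ‖D‖ ^ 2 + ‖g‖ ^ 2) / (μ + L) := by ring
    _ ≤ ⟪g, D⟫ := this

/-- per-agent gradient step contraction -/
lemma step_contract {f : E → ℝ} {μ L : ℝ} (hμ : 0 < μ) (hμL : μ ≤ L)
    (hf : Differentiable ℝ f)
    (hsc : ConvexOn ℝ Set.univ (fun x => f x - μ / 2 * ‖x‖ ^ 2))
    (hsm : LipschitzWith L.toNNReal (gradient f))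
    {c α : ℝ} (hc : 0 < c) (hα0 : 0 < α) (hα : α * (c * (μ + L)) ≤ 2) (a b : E) :
    ‖(a - b) - α • (gradient f (c • a) - gradient f (c • b))‖ ^ 2
      ≤ (1 - μ * L * c / (μ + L) * α) ^ 2 * ‖a - b‖ ^ 2 := by
  have hL : 0 < L := hμ.trans_le hμL
  have hP : 0 < μ + L := by linarith
  set d : E := a - b with hd
  set g : E := gradient f (c • a) - gradient f (c • b) with hg
  have hxy : c • a - c • b = c • d := by rw [hd, smul_sub]
  have hinterp := interp_ineq hμ hμL hf hsc hsm (c • a) (c • b)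
  rw [← hg, hxy] at hinterp
  have hnorm_cd : ‖c • d‖ ^ 2 = c ^ 2 * ‖d‖ ^ 2 := by
    rw [norm_smul, Real.norm_eq_abs, mul_pow, sq_abs]
  have hinner_cd : ⟪g, c • d⟫ = c * ⟪g, d⟫ := real_inner_smul_right g d c
  rw [hnorm_cd, hinner_cd] at hinterp
  -- hinterp : μL/(μ+L) * c^2 ‖d‖^2 + 1/(μ+L) ‖g‖^2 ≤ c * ⟪g, d⟫
  have hfactor : 2 * α * ⟪g, d⟫ ≥ 2 * (μ * L * c / (μ + L) * α) * ‖d‖ ^ 2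
      + 2 * α / (c * (μ + L)) * ‖g‖ ^ 2 := by
    have h2 := mul_le_mul_of_nonneg_left hinterp (by positivity : (0:ℝ) ≤ 2 * α / c)
    have e1 : 2 * α / c * (c * ⟪g, d⟫) = 2 * α * ⟪g, d⟫ := by
      field_simp
    have e2 : 2 * α / c * (μ * L / (μ + L) * (c ^ 2 * ‖d‖ ^ 2) + 1 / (μ + L) * ‖g‖ ^ 2)
        = 2 * (μ * L * c / (μ + L) * α) * ‖d‖ ^ 2 + 2 * α / (c * (μ + L)) * ‖g‖ ^ 2 := by
      field_simp
    rw [e1, e2] at h2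
    linarith [h2]
  have hterm : α ^ 2 * ‖g‖ ^ 2 ≤ 2 * α / (c * (μ + L)) * ‖g‖ ^ 2 := by
    apply mul_le_mul_of_nonneg_right _ (sq_nonneg ‖g‖)
    rw [le_div_iff₀ (by positivity : (0:ℝ) < c * (μ + L))]
    nlinarith [mul_le_mul_of_nonneg_left hα hα0.le]
  have hexpand : ‖d - α • g‖ ^ 2 = ‖d‖ ^ 2 - 2 * α * ⟪d, g⟫ + α ^ 2 * ‖g‖ ^ 2 := by
    rw [norm_sub_sq_real, real_inner_smul_right, norm_smul, Real.norm_eq_abs, mul_pow, sq_abs]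
    ring
  rw [hexpand]
  have hcomm : ⟪d, g⟫ = ⟪g, d⟫ := real_inner_comm g d
  rw [hcomm]
  nlinarith [hfactor, hterm, sq_nonneg (μ * L * c / (μ + L) * α), sq_nonneg ‖d‖,
    mul_nonneg (sq_nonneg (μ * L * c / (μ + L) * α)) (sq_nonneg ‖d‖)]

end Aux

theorem stmt_7 {n d : ℕ} (hn : 0 < n)
    (f : Fin n → EuclideanSpace ℝ (Fin d) → ℝ)
    (μ L : Fin n → ℝ) (W : Matrix (Fin n) (Fin n) ℝ) (π : Fin n → ℝ) (α : ℝ)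
    (hμ : ∀ k, 0 < μ k) (hμL : ∀ k, μ k ≤ L k)
    (hdiff : ∀ k, Differentiable ℝ (f k))
    (hsc : ∀ k, ConvexOn ℝ Set.univ (fun x => f k x - μ k / 2 * ‖x‖ ^ 2))
    (hsm : ∀ k, LipschitzWith (L k).toNNReal (gradient (f k)))
    (hW_nonneg : ∀ i j, 0 ≤ W i j)
    (hW_col : ∀ j, ∑ k, W k j = 1)
    (hπ_pos : ∀ k, 0 < π k)
    (hπ_sum : ∑ k, π k = 1)
    (hπ_eig : ∀ k, ∑ j, W k j * π j = π k)
    (hα0 : 0 < α) (hα : α ≤ ⨅ k, 2 * n * π k / (L k + μ k)) :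
    ∀ w v : Fin n → EuclideanSpace ℝ (Fin d),
      Real.sqrt (∑ k, (1 / π k) *
          ‖(∑ j, W k j • (w j - α • gradient (f j) ((1 / (n * π j)) • w j))) -
            (∑ j, W k j • (v j - α • gradient (f j) ((1 / (n * π j)) • v j)))‖ ^ 2) ≤
        (1 - (⨅ k, μ k * L k / (n * π k * (μ k + L k))) * α) *
          Real.sqrt (∑ k, (1 / π k) * ‖w k - v k‖ ^ 2) := by
  intro w v
  haveI : Nonempty (Fin n) := ⟨⟨0, hn⟩⟩
  have hn' : (0 : ℝ) < n := by exact_mod_cast hn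
  set C : ℝ := ⨅ k, μ k * L k / (n * π k * (μ k + L k)) with hC
  have hμLpos : ∀ k, 0 < μ k + L k := fun k => by linarith [hμ k, (hμ k).trans_le (hμL k)]
  have hσpos : ∀ k, 0 < μ k * L k / (n * π k * (μ k + L k)) :=
    fun k => div_pos (mul_pos (hμ k) ((hμ k).trans_le (hμL k)))
      (mul_pos (mul_pos hn' (hπ_pos k)) (hμLpos k))
  have hCle : ∀ k, C ≤ μ k * L k / (n * π k * (μ k + L k)) := fun k =>
    ciInf_le (Finite.bddBelow_range _) k
  have hC0 : 0 ≤ C := le_ciInf fun k => (hσpos k).le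
  have hαk : ∀ k, α ≤ 2 * n * π k / (L k + μ k) := fun k =>
    hα.trans (ciInf_le (Finite.bddBelow_range _) k)
  have hσα1 : ∀ k, μ k * L k / (n * π k * (μ k + L k)) * α ≤ 1 := by
    intro k
    have h1 : μ k * L k / (n * π k * (μ k + L k)) * α
        ≤ μ k * L k / (n * π k * (μ k + L k)) * (2 * n * π k / (L k + μ k)) :=
      mul_le_mul_of_nonneg_left (hαk k) (hσpos k).le
    refine h1.trans ?_
    have hLμ : (0:ℝ) < L k + μ k := by linarith [hμLpos k]
    rw [div_mul_div_comm, div_le_one (mul_pos (mul_pos (mul_pos hn' (hπ_pos k)) (hμLpos k)) hLμ)]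
    nlinarith [mul_nonneg (mul_nonneg hn'.le (hπ_pos k).le) (sq_nonneg (μ k - L k)),
      mul_nonneg (mul_nonneg (mul_nonneg hn'.le (hπ_pos k).le) (hμ k).le) ((hμ k).trans_le (hμL k)).le]
  have hCα1 : C * α ≤ 1 := by
    set k0 : Fin n := ⟨0, hn⟩
    exact le_trans (mul_le_mul_of_nonneg_right (hCle k0) hα0.le) (hσα1 k0)
  have h1Cα : 0 ≤ 1 - C * α := by linarith
  set u : Fin n → EuclideanSpace ℝ (Fin d) := fun j =>
    (w j - α • gradient (f j) ((1 / (n * π j)) • w j)) -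
      (v j - α • gradient (f j) ((1 / (n * π j)) • v j)) with hu
  -- per agent contraction
  have hstep : ∀ k, ‖u k‖ ^ 2 ≤ (1 - C * α) ^ 2 * ‖w k - v k‖ ^ 2 := by
    intro k
    have hnπ : (0:ℝ) < n * π k := mul_pos hn' (hπ_pos k)
    have hnπ' : (n:ℝ) * π k ≠ 0 := hnπ.ne'
    have hc : (0 : ℝ) < 1 / (n * π k) := one_div_pos.mpr hnπ
    have hαc : α * (1 / (n * π k) * (μ k + L k)) ≤ 2 := by
      have hLμ : (0:ℝ) < L k + μ k := by linarith [hμLpos k]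
      have h' : α * (L k + μ k) ≤ 2 * n * π k := by
        have := (le_div_iff₀ hLμ).mp (hαk k)
        linarith
      calc α * (1 / (n * π k) * (μ k + L k)) = α * (L k + μ k) * (1 / (n * π k)) := by ring
        _ ≤ 2 * n * π k * (1 / (n * π k)) := by
            apply mul_le_mul_of_nonneg_right h' hc.le
        _ = 2 := by
            have hπk0 : π k ≠ 0 := (hπ_pos k).ne'
            field_simp
    have hstep' := step_contract (hμ k) (hμL k) (hdiff k) (hsc k) (hsm k) hc hα0 hαc (w k) (v k)
    have heq1 : u k = (w k - v k) - α • (gradient (f k) ((1 / (n * π k)) • w k)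
        - gradient (f k) ((1 / (n * π k)) • v k)) := by
      rw [hu, smul_sub]; abel
    have heq2 : μ k * L k * (1 / (n * π k)) / (μ k + L k)
        = μ k * L k / (n * π k * (μ k + L k)) := by
      rw [mul_one_div, div_div]
    rw [heq2] at hstep'
    rw [heq1]
    refine hstep'.trans ?_
    apply mul_le_mul_of_nonneg_right _ (sq_nonneg _)
    have hle1 : C * α ≤ μ k * L k / (n * π k * (μ k + L k)) * α :=
      mul_le_mul_of_nonneg_right (hCle k) hα0.le
    have h0 : 0 ≤ 1 - μ k * L k / (n * π k * (μ k + L k)) * α := by linarith [hσα1 k]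
    apply pow_le_pow_left₀ h0
    linarith
  -- mixing inequality
  have hmix : ∑ k, (1 / π k) * ‖∑ j, W k j • u j‖ ^ 2 ≤ ∑ j, (1 / π j) * ‖u j‖ ^ 2 := by
    have hper : ∀ k, (1 / π k) * ‖∑ j, W k j • u j‖ ^ 2
        ≤ ∑ j, W k j * ((1 / π j) * ‖u j‖ ^ 2) := by
      intro k
      have h1 : ‖∑ j, W k j • u j‖ ≤ ∑ j, W k j * ‖u j‖ := by
        refine (norm_sum_le _ _).trans ?_
        apply Finset.sum_le_sum
        intro j _
        rw [norm_smul, Real.norm_eq_abs, abs_of_nonneg (hW_nonneg k j)]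
      have h2 : (∑ j, W k j * ‖u j‖) ^ 2
          ≤ (∑ j, W k j * π j) * (∑ j, W k j * ((1 / π j) * ‖u j‖ ^ 2)) := by
        have hcs := Finset.sum_mul_sq_le_sq_mul_sq Finset.univ
          (fun j => Real.sqrt (W k j * π j))
          (fun j => Real.sqrt (W k j * (1 / π j)) * ‖u j‖)
        have e1 : ∀ j : Fin n, Real.sqrt (W k j * π j) * (Real.sqrt (W k j * (1 / π j)) * ‖u j‖)
            = W k j * ‖u j‖ := by
          intro j
          rw [← mul_assoc, ← Real.sqrt_mul (mul_nonneg (hW_nonneg k j) (hπ_pos j).le)]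
          have hπj : π j ≠ 0 := (hπ_pos j).ne'
          have he : W k j * π j * (W k j * (1 / π j)) = (W k j) ^ 2 := by
            field_simp
          rw [he, Real.sqrt_sq (hW_nonneg k j)]
        have e2 : ∀ j : Fin n, Real.sqrt (W k j * π j) ^ 2 = W k j * π j := fun j =>
          Real.sq_sqrt (mul_nonneg (hW_nonneg k j) (hπ_pos j).le)
        have e3 : ∀ j : Fin n, (Real.sqrt (W k j * (1 / π j)) * ‖u j‖) ^ 2
            = W k j * ((1 / π j) * ‖u j‖ ^ 2) := by
          intro j
          rw [mul_pow, Real.sq_sqrt (mul_nonneg (hW_nonneg k j) (one_div_pos.mpr (hπ_pos j)).le)]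
          ring
        calc (∑ j, W k j * ‖u j‖) ^ 2
            = (∑ j, Real.sqrt (W k j * π j) * (Real.sqrt (W k j * (1 / π j)) * ‖u j‖)) ^ 2 := by
              congr 1; exact (Finset.sum_congr rfl fun j _ => (e1 j).symm)
          _ ≤ (∑ j, Real.sqrt (W k j * π j) ^ 2)
              * (∑ j, (Real.sqrt (W k j * (1 / π j)) * ‖u j‖) ^ 2) := hcs
          _ = (∑ j, W k j * π j) * (∑ j, W k j * ((1 / π j) * ‖u j‖ ^ 2)) := by
              congr 1
              · exact Finset.sum_congr rfl fun j _ => e2 j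
              · exact Finset.sum_congr rfl fun j _ => e3 j
      rw [hπ_eig k] at h2
      have h3 : ‖∑ j, W k j • u j‖ ^ 2 ≤ π k * (∑ j, W k j * ((1 / π j) * ‖u j‖ ^ 2)) :=
        le_trans (pow_le_pow_left₀ (norm_nonneg _) h1 2) h2
      have hπk := hπ_pos k
      have hπk' : π k ≠ 0 := hπk.ne'
      calc (1 / π k) * ‖∑ j, W k j • u j‖ ^ 2
          ≤ (1 / π k) * (π k * (∑ j, W k j * ((1 / π j) * ‖u j‖ ^ 2))) :=
            mul_le_mul_of_nonneg_left h3 (one_div_pos.mpr hπk).le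
        _ = ∑ j, W k j * ((1 / π j) * ‖u j‖ ^ 2) := by
            rw [← mul_assoc, one_div, inv_mul_cancel₀ hπk', one_mul]
    calc ∑ k, (1 / π k) * ‖∑ j, W k j • u j‖ ^ 2
        ≤ ∑ k, ∑ j, W k j * ((1 / π j) * ‖u j‖ ^ 2) := Finset.sum_le_sum fun k _ => hper k
      _ = ∑ j, (∑ k, W k j) * ((1 / π j) * ‖u j‖ ^ 2) := by
          rw [Finset.sum_comm]
          exact Finset.sum_congr rfl fun j _ => (Finset.sum_mul _ _ _).symm
      _ = ∑ j, (1 / π j) * ‖u j‖ ^ 2 := by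
          exact Finset.sum_congr rfl fun j _ => by rw [hW_col j, one_mul]
  -- assemble
  have hrw : ∀ k, (∑ j, W k j • (w j - α • gradient (f j) ((1 / (n * π j)) • w j))) -
      (∑ j, W k j • (v j - α • gradient (f j) ((1 / (n * π j)) • v j)))
      = ∑ j, W k j • u j := by
    intro k
    rw [← Finset.sum_sub_distrib]
    exact Finset.sum_congr rfl fun j _ => (smul_sub _ _ _).symm
  have hfinal : ∑ j, (1 / π j) * ‖u j‖ ^ 2
      ≤ (1 - C * α) ^ 2 * ∑ k, (1 / π k) * ‖w k - v k‖ ^ 2 := by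
    rw [Finset.mul_sum]
    apply Finset.sum_le_sum
    intro j _
    have := mul_le_mul_of_nonneg_left (hstep j) (one_div_pos.mpr (hπ_pos j)).le
    calc (1 / π j) * ‖u j‖ ^ 2 ≤ (1 / π j) * ((1 - C * α) ^ 2 * ‖w j - v j‖ ^ 2) := this
      _ = (1 - C * α) ^ 2 * ((1 / π j) * ‖w j - v j‖ ^ 2) := by ring
  calc Real.sqrt (∑ k, (1 / π k) *
        ‖(∑ j, W k j • (w j - α • gradient (f j) ((1 / (n * π j)) • w j))) -
          (∑ j, W k j • (v j - α • gradient (f j) ((1 / (n * π j)) • v j)))‖ ^ 2)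
      = Real.sqrt (∑ k, (1 / π k) * ‖∑ j, W k j • u j‖ ^ 2) := by
        congr 1
        exact Finset.sum_congr rfl fun k _ => by rw [hrw k]
    _ ≤ Real.sqrt ((1 - C * α) ^ 2 * ∑ k, (1 / π k) * ‖w k - v k‖ ^ 2) :=
        Real.sqrt_le_sqrt (hmix.trans hfinal)
    _ = (1 - C * α) * Real.sqrt (∑ k, (1 / π k) * ‖w k - v k‖ ^ 2) := by
        rw [Real.sqrt_mul (sq_nonneg _), Real.sqrt_sq h1Cα]
end

section
/- Suppose each fⱼ(x) = (1/2)xᵀAⱼx + Bⱼx with Aⱼ symmetric positive semidefinite and ΣⱼAⱼ positive definite, and W column stochastic with positive diagonal inducing a strongly connected graph with right eigenvector π (positive entries). Then for any α ∈ (0, min_k 2nπₖ/λ_max(Aₖ)), the linear map L_α with (L_α x)ₖ = Σⱼ Wₖⱼ(I - (α/(nπⱼ))Aⱼ)xⱼ satisfies sup_{x≠0} ‖L_α x‖_{π⊗1_d}/‖x‖_{π⊗1_d} < 1. -/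
/-!
The map is a blockwise gradient step `x_j ↦ x_j - t_j A_j x_j`, `t_j = α / (n π_j)`, followed
by mixing with `W`. Since `0 ≤ A_j` and `t_j λ_max(A_j) < 2`, the gradient step does not increase
any block norm, and keeps it only when `A_j x_j = 0`. By a weighted variance identity, mixing `y`
lowers the `π`-weighted norm by a weighted sum of the squared differences of the ratios
`y_j / π_j` along the edges of the graph. So if the norm is not lowered, every `x_j / π_j` equals
one vector `v` (strong connectivity), which lies in the kernel of every `A_j`, hence of `∑ A_j`,
so `x = 0`. Both norms are continuous and homogeneous of degree two, so the strict inequality on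
the compact unit sphere gives a uniform factor `η < 1`.
-/

open Finset Metric
open scoped Matrix MatrixOrder

theorem exists_lt_one_forall_le_mul_of_lt {E : Type*} [NormedAddCommGroup E] [NormedSpace ℝ E]
    [ProperSpace E] {f g : E → ℝ} (hf : Continuous f) (hg : Continuous g)
    (hf_smul : ∀ (c : ℝ) (x : E), f (c • x) = c ^ 2 * f x)
    (hg_smul : ∀ (c : ℝ) (x : E), g (c • x) = c ^ 2 * g x)
    (hg_pos : ∀ x ≠ 0, 0 < g x) (hfg : ∀ x ≠ 0, f x < g x) :
    ∃ c, 0 ≤ c ∧ c < 1 ∧ ∀ x, f x ≤ c * g x := by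
  have hf0 : f 0 = 0 := by simpa using hf_smul 0 0
  have hg0 : g 0 = 0 := by simpa using hg_smul 0 0
  suffices ∃ c < 1, ∀ x ∈ sphere (0 : E) 1, f x ≤ c * g x by
    obtain ⟨c, hc1, hc⟩ := this
    refine ⟨max c 0, le_max_right _ _, max_lt hc1 one_pos, fun x => ?_⟩
    rcases eq_or_ne x 0 with rfl | hx
    · simp [hf0, hg0]
    have hu : ‖x‖⁻¹ • x ∈ sphere (0 : E) 1 := by simp [norm_smul, hx]
    have hxu : x = ‖x‖ • ‖x‖⁻¹ • x := by
      rw [smul_smul, mul_inv_cancel₀ (norm_ne_zero_iff.2 hx), one_smul]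
    have hgu : 0 ≤ g (‖x‖⁻¹ • x) := (hg_pos _ (ne_of_mem_sphere hu one_ne_zero)).le
    rw [hxu, hf_smul, hg_smul, mul_left_comm]
    gcongr
    exact (hc _ hu).trans (by gcongr; exact le_max_left _ _)
  rcases (sphere (0 : E) 1).eq_empty_or_nonempty with h | h
  · exact ⟨0, one_pos, by simp [h]⟩
  have hg_sphere : ∀ x ∈ sphere (0 : E) 1, 0 < g x := fun x hx =>
    hg_pos x (ne_of_mem_sphere hx one_ne_zero)
  obtain ⟨x₀, hx₀, hmax⟩ := (isCompact_sphere (0 : E) 1).exists_isMaxOn h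
    (hf.continuousOn.div hg.continuousOn fun x hx => (hg_sphere x hx).ne')
  refine ⟨f x₀ / g x₀,
    (div_lt_one (hg_sphere x₀ hx₀)).2 (hfg x₀ (ne_of_mem_sphere hx₀ one_ne_zero)), fun x hx => ?_⟩
  rw [← div_le_iff₀ (hg_sphere x hx)]
  exact hmax hx

theorem Matrix.PosSemidef.mul_self_le_smul {ι : Type*} [Fintype ι] [DecidableEq ι]
    {B : Matrix ι ι ℝ} (hB : B.PosSemidef) {lam : ℝ} (hlam : ∀ μ ∈ spectrum ℝ B, μ ≤ lam) :
    B * B ≤ lam • B := by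
  have hB' : IsSelfAdjoint B := hB.isHermitian
  have hcfc : lam • B - B * B = cfc (fun x => lam * x - x * x) B := by
    rw [cfc_sub (fun x => lam * x) (fun x => x * x) B, cfc_const_mul lam (fun x => x) B,
      cfc_mul (fun x => x) (fun x => x) B, cfc_id' ℝ B]
  rw [← sub_nonneg, hcfc]
  refine cfc_nonneg fun x hx => ?_
  nlinarith [hlam x hx, spectrum_nonneg_of_nonneg hB.nonneg hx]

theorem Matrix.PosSemidef.dotProduct_sub_smul_mulVec_add_le {ι : Type*} [Fintype ι]
    [DecidableEq ι] {B : Matrix ι ι ℝ} (hB : B.PosSemidef) {lam : ℝ}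
    (hlam : ∀ μ ∈ spectrum ℝ B, μ ≤ lam) (t : ℝ) (y : ι → ℝ) :
    (y - t • B *ᵥ y) ⬝ᵥ (y - t • B *ᵥ y) + t * (2 - t * lam) * (y ⬝ᵥ B *ᵥ y) ≤ y ⬝ᵥ y := by
  have hvecMul : y ᵥ* B = B *ᵥ y := by
    rw [← mulVec_transpose, ← conjTranspose_eq_transpose_of_trivial, hB.isHermitian.eq]
  have hsymm : B *ᵥ y ⬝ᵥ y = y ⬝ᵥ B *ᵥ y := by
    rw [dotProduct_mulVec, hvecMul]
  have hsq : B *ᵥ y ⬝ᵥ B *ᵥ y ≤ lam * (y ⬝ᵥ B *ᵥ y) := by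
    have := (hB.mul_self_le_smul hlam).dotProduct_mulVec_nonneg y
    rw [star_trivial, sub_mulVec, dotProduct_sub, smul_mulVec, dotProduct_smul, ← mulVec_mulVec,
      dotProduct_mulVec y B (B *ᵥ y), hvecMul, smul_eq_mul] at this
    linarith
  simp only [sub_dotProduct, dotProduct_sub, smul_dotProduct, dotProduct_smul, smul_eq_mul, hsymm]
  nlinarith [mul_le_mul_of_nonneg_left hsq (sq_nonneg t)]

theorem Matrix.PosDef.eq_zero_of_forall_mulVec_eq_zero {κ ι R : Type*} [Fintype κ] [Fintype ι]
    [Ring R] [PartialOrder R] [StarRing R] {A : κ → Matrix ι ι R} (hA : (∑ j, A j).PosDef)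
    {v : ι → R} (hv : ∀ j, A j *ᵥ v = 0) : v = 0 := by
  by_contra hne
  simpa [sum_mulVec, hv] using hA.dotProduct_mulVec_pos hne

theorem two_mul_sq_sum_mul_add_sum_sum_mul_sub_sq {κ : Type*} [Fintype κ] (w u : κ → ℝ) :
    2 * (∑ j, w j * u j) ^ 2 + ∑ j, ∑ j', w j * w j' * (u j - u j') ^ 2 =
      2 * (∑ j, w j) * ∑ j, w j * u j ^ 2 := by
  calc 2 * (∑ j, w j * u j) ^ 2 + ∑ j, ∑ j', w j * w j' * (u j - u j') ^ 2
      = ∑ j, ∑ j', (w j' * (w j * u j ^ 2) + w j * (w j' * u j' ^ 2)) := by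
        rw [sq, sum_mul_sum, mul_sum, ← sum_add_distrib]
        refine sum_congr rfl fun j _ => ?_
        rw [mul_sum, ← sum_add_distrib]
        exact sum_congr rfl fun j' _ => by ring
    _ = 2 * (∑ j, w j) * ∑ j, w j * u j ^ 2 := by
        simp only [sum_add_distrib, ← mul_sum, ← sum_mul]
        ring

theorem div_mul_lt_two_of_lt_two_mul_div {a b l : ℝ} (ha : 0 < a) (hb : 0 < b)
    (h : a < 2 * b / l) : a / b * l < 2 := by
  rcases le_or_gt l 0 with hl | hl
  · nlinarith [div_pos ha hb]
  · rw [lt_div_iff₀ hl] at h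
    rw [div_mul_eq_mul_div, div_lt_iff₀ hb]
    linarith

namespace DecentralizedGD

variable {κ ι : Type*}

section Mixing

variable [Fintype κ]

def mixBlocks (W : Matrix κ κ ℝ) (y : κ → ι → ℝ) : κ → ι → ℝ := fun k i => ∑ j, W k j * y j i

theorem mixBlocks_smul (W : Matrix κ κ ℝ) (c : ℝ) (y : κ → ι → ℝ) :
    mixBlocks W (c • y) = c • mixBlocks W y := by
  ext k i
  simp only [mixBlocks, Pi.smul_apply, smul_eq_mul, mul_sum, mul_left_comm]

theorem continuous_mixBlocks (W : Matrix κ κ ℝ) :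
    Continuous (mixBlocks W : (κ → ι → ℝ) → κ → ι → ℝ) := by
  unfold mixBlocks
  fun_prop

end Mixing

section GradientStep

variable [Fintype ι]

def gradStep (A : κ → Matrix ι ι ℝ) (t : κ → ℝ) (x : κ → ι → ℝ) : κ → ι → ℝ :=
  fun j => x j - t j • A j *ᵥ x j

theorem gradStep_smul (A : κ → Matrix ι ι ℝ) (t : κ → ℝ) (c : ℝ) (x : κ → ι → ℝ) :
    gradStep A t (c • x) = c • gradStep A t x := by
  funext j
  simp only [gradStep, Pi.smul_apply, Matrix.mulVec_smul, smul_sub, smul_comm c (t j)]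

theorem continuous_gradStep (A : κ → Matrix ι ι ℝ) (t : κ → ℝ) :
    Continuous (gradStep A t) := by
  unfold gradStep
  fun_prop

end GradientStep

variable [Fintype κ] [Fintype ι]

noncomputable def weightedSqNorm (π : κ → ℝ) (x : κ → ι → ℝ) : ℝ :=
  ∑ k, (1 / π k) * ∑ i, x k i ^ 2

theorem weightedSqNorm_pos {π : κ → ℝ} (hπ : ∀ k, 0 < π k) {x : κ → ι → ℝ} (hx : x ≠ 0) :
    0 < weightedSqNorm π x := by
  obtain ⟨k, i, hki⟩ : ∃ k i, x k i ≠ 0 := by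
    by_contra! h
    exact hx (funext fun k => funext (h k))
  refine sum_pos' (fun k _ => mul_nonneg (one_div_pos.2 (hπ k)).le
    (sum_nonneg fun i _ => sq_nonneg _)) ⟨k, mem_univ k, mul_pos (one_div_pos.2 (hπ k)) ?_⟩
  exact sum_pos' (fun i _ => sq_nonneg _) ⟨i, mem_univ i, sq_pos_of_ne_zero hki⟩

theorem weightedSqNorm_smul (π : κ → ℝ) (c : ℝ) (x : κ → ι → ℝ) :
    weightedSqNorm π (c • x) = c ^ 2 * weightedSqNorm π x := by
  simp only [weightedSqNorm, Pi.smul_apply, smul_eq_mul, mul_pow, ← mul_sum, mul_left_comm]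

theorem continuous_weightedSqNorm (π : κ → ℝ) :
    Continuous (weightedSqNorm π : (κ → ι → ℝ) → ℝ) := by
  unfold weightedSqNorm
  fun_prop

noncomputable def mixingDefect (W : Matrix κ κ ℝ) (π : κ → ℝ) (y : κ → ι → ℝ) : ℝ :=
  ∑ k, (1 / π k) * ∑ i, ∑ j, ∑ j',
    W k j * π j * (W k j' * π j') * (y j i / π j - y j' i / π j') ^ 2

theorem two_mul_weightedSqNorm_mixBlocks_add_mixingDefect {W : Matrix κ κ ℝ} {π : κ → ℝ}
    (hπ : ∀ k, π k ≠ 0) (hcol : ∀ j, ∑ k, W k j = 1) (heig : ∀ k, ∑ j, W k j * π j = π k)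
    (y : κ → ι → ℝ) :
    2 * weightedSqNorm π (mixBlocks W y) + mixingDefect W π y = 2 * weightedSqNorm π y := by
  have hpoint : ∀ k i, 2 * (∑ j, W k j * y j i) ^ 2 +
      ∑ j, ∑ j', W k j * π j * (W k j' * π j') * (y j i / π j - y j' i / π j') ^ 2 =
        2 * π k * ∑ j, W k j * ((1 / π j) * y j i ^ 2) := by
    intro k i
    have h := two_mul_sq_sum_mul_add_sum_sum_mul_sub_sq (fun j => W k j * π j)
      (fun j => y j i / π j)
    have hw : ∀ j, W k j * π j * (y j i / π j) = W k j * y j i := fun j => by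
      field_simp [hπ j]
    have hw2 : ∀ j, W k j * π j * (y j i / π j) ^ 2 = W k j * ((1 / π j) * y j i ^ 2) :=
      fun j => by field_simp [hπ j]
    simpa only [heig, hw, hw2] using h
  calc 2 * weightedSqNorm π (mixBlocks W y) + mixingDefect W π y
      = ∑ k, (1 / π k) * ∑ i, (2 * (∑ j, W k j * y j i) ^ 2 +
          ∑ j, ∑ j', W k j * π j * (W k j' * π j') * (y j i / π j - y j' i / π j') ^ 2) := by
        simp only [weightedSqNorm, mixingDefect, mixBlocks, mul_sum, sum_add_distrib, mul_add]
        ring_nf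
    _ = ∑ k, ∑ i, 2 * ∑ j, W k j * ((1 / π j) * y j i ^ 2) := by
        refine sum_congr rfl fun k _ => ?_
        simp only [hpoint, mul_sum]
        refine sum_congr rfl fun i _ => ?_
        field_simp [hπ k]
    _ = 2 * ∑ j, (∑ k, W k j) * ((1 / π j) * ∑ i, y j i ^ 2) := by
        simp only [sum_mul, mul_sum]
        rw [sum_comm_cycle]
        exact sum_congr rfl fun j _ => sum_comm
    _ = 2 * weightedSqNorm π y := by
        simp only [hcol, one_mul, weightedSqNorm]

theorem mixingDefect_nonneg {W : Matrix κ κ ℝ} {π : κ → ℝ} (hπ : ∀ k, 0 < π k)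
    (hW : ∀ k j, 0 ≤ W k j) (y : κ → ι → ℝ) : 0 ≤ mixingDefect W π y :=
  sum_nonneg fun k _ => mul_nonneg (one_div_pos.2 (hπ k)).le <|
    sum_nonneg fun _ _ => sum_nonneg fun j _ => sum_nonneg fun j' _ =>
      mul_nonneg (mul_nonneg (mul_nonneg (hW k j) (hπ j).le) (mul_nonneg (hW k j') (hπ j').le))
        (sq_nonneg _)

theorem weightedSqNorm_mixBlocks_le {W : Matrix κ κ ℝ} {π : κ → ℝ} (hπ : ∀ k, 0 < π k)
    (hW : ∀ k j, 0 ≤ W k j) (hcol : ∀ j, ∑ k, W k j = 1) (heig : ∀ k, ∑ j, W k j * π j = π k)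
    (y : κ → ι → ℝ) : weightedSqNorm π (mixBlocks W y) ≤ weightedSqNorm π y := by
  linarith [two_mul_weightedSqNorm_mixBlocks_add_mixingDefect (fun k => (hπ k).ne') hcol heig y,
    mixingDefect_nonneg hπ hW y]

theorem div_eq_div_of_mixingDefect_eq_zero {W : Matrix κ κ ℝ} {π : κ → ℝ} (hπ : ∀ k, 0 < π k)
    (hW : ∀ k j, 0 ≤ W k j) {y : κ → ι → ℝ} (h : mixingDefect W π y = 0) {k j : κ}
    (hkj : 0 < W k j) (hkk : 0 < W k k) (i : ι) : y j i / π j = y k i / π k := by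
  have hterm : ∀ k i j j',
      0 ≤ W k j * π j * (W k j' * π j') * (y j i / π j - y j' i / π j') ^ 2 :=
    fun k _ j j' => mul_nonneg (mul_nonneg (mul_nonneg (hW k j) (hπ j).le)
      (mul_nonneg (hW k j') (hπ j').le)) (sq_nonneg _)
  have hle : (1 / π k) * (W k j * π j * (W k k * π k) * (y j i / π j - y k i / π k) ^ 2) ≤ 0 := by
    rw [← h, mixingDefect]
    refine le_trans ?_ (single_le_sum (fun k _ => mul_nonneg (one_div_pos.2 (hπ k)).le <|
      sum_nonneg fun i _ => sum_nonneg fun j _ => sum_nonneg fun j' _ => hterm k i j j')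
        (mem_univ k))
    gcongr
    · exact (one_div_pos.2 (hπ k)).le
    refine le_trans ?_ (single_le_sum (fun i _ => sum_nonneg fun j _ => sum_nonneg fun j' _ =>
      hterm k i j j') (mem_univ i))
    refine le_trans ?_
      (single_le_sum (fun j _ => sum_nonneg fun j' _ => hterm k i j j') (mem_univ j))
    exact single_le_sum (fun j' _ => hterm k i j j') (mem_univ k)
  have hcoef : 0 < (1 / π k) * (W k j * π j * (W k k * π k)) :=
    mul_pos (one_div_pos.2 (hπ k)) (mul_pos (mul_pos hkj (hπ j)) (mul_pos hkk (hπ k)))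
  rw [← mul_assoc] at hle
  have hsq := le_antisymm (nonpos_of_mul_nonpos_right hle hcoef) (sq_nonneg _)
  exact sub_eq_zero.1 (pow_eq_zero_iff two_ne_zero |>.1 hsq)

variable [DecidableEq ι]

theorem weightedSqNorm_gradStep_add_le {A : κ → Matrix ι ι ℝ} {π lam : κ → ℝ}
    (hπ : ∀ k, 0 < π k) (hA : ∀ j, (A j).PosSemidef)
    (hlam : ∀ j, ∀ μ ∈ spectrum ℝ (A j), μ ≤ lam j) (t : κ → ℝ) (x : κ → ι → ℝ) :
    weightedSqNorm π (gradStep A t x) +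
        ∑ j, (1 / π j) * (t j * (2 - t j * lam j) * (x j ⬝ᵥ A j *ᵥ x j)) ≤
      weightedSqNorm π x := by
  have hsq : ∀ v : ι → ℝ, ∑ i, v i ^ 2 = v ⬝ᵥ v := fun v => by simp only [dotProduct, sq]
  rw [weightedSqNorm, weightedSqNorm, ← sum_add_distrib]
  refine sum_le_sum fun j _ => ?_
  rw [← mul_add, hsq, hsq]
  exact mul_le_mul_of_nonneg_left
    ((hA j).dotProduct_sub_smul_mulVec_add_le (hlam j) (t j) (x j)) (one_div_pos.2 (hπ j)).le

theorem mulVec_eq_zero_of_weightedSqNorm_le_gradStep {A : κ → Matrix ι ι ℝ} {π lam t : κ → ℝ}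
    (hπ : ∀ k, 0 < π k) (hA : ∀ j, (A j).PosSemidef)
    (hlam : ∀ j, ∀ μ ∈ spectrum ℝ (A j), μ ≤ lam j) (ht : ∀ j, 0 < t j)
    (htlam : ∀ j, t j * lam j < 2) {x : κ → ι → ℝ}
    (h : weightedSqNorm π x ≤ weightedSqNorm π (gradStep A t x)) (j : κ) :
    A j *ᵥ x j = 0 := by
  have hq : ∀ j, 0 ≤ x j ⬝ᵥ A j *ᵥ x j := fun j => by
    simpa only [star_trivial] using (hA j).dotProduct_mulVec_nonneg (x j)
  have hcoef : ∀ j, 0 < (1 / π j) * (t j * (2 - t j * lam j)) := fun j =>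
    mul_pos (one_div_pos.2 (hπ j)) (mul_pos (ht j) (by linarith [htlam j]))
  have hterm : ∀ j, 0 ≤ (1 / π j) * (t j * (2 - t j * lam j) * (x j ⬝ᵥ A j *ᵥ x j)) :=
    fun j => by rw [← mul_assoc]; exact mul_nonneg (hcoef j).le (hq j)
  have hle : (1 / π j) * (t j * (2 - t j * lam j) * (x j ⬝ᵥ A j *ᵥ x j)) ≤ 0 :=
    (single_le_sum (fun j _ => hterm j) (mem_univ j)).trans
      (by linarith [weightedSqNorm_gradStep_add_le hπ hA hlam t x])
  rw [← mul_assoc] at hle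
  have hq0 := le_antisymm (nonpos_of_mul_nonpos_right hle (hcoef j)) (hq j)
  exact ((hA j).dotProduct_mulVec_zero_iff (x j)).1 (by rwa [star_trivial])

theorem weightedSqNorm_mixBlocks_gradStep_lt {W : Matrix κ κ ℝ} {A : κ → Matrix ι ι ℝ}
    {π lam t : κ → ℝ} (hπ : ∀ k, 0 < π k) (hW : ∀ k j, 0 ≤ W k j) (hcol : ∀ j, ∑ k, W k j = 1)
    (hdiag : ∀ j, 0 < W j j) (hconn : ∀ a b, Relation.ReflTransGen (fun a b => 0 < W b a) a b)
    (heig : ∀ k, ∑ j, W k j * π j = π k) (hA : ∀ j, (A j).PosSemidef)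
    (hAsum : (∑ j, A j).PosDef) (hlam : ∀ j, ∀ μ ∈ spectrum ℝ (A j), μ ≤ lam j)
    (ht : ∀ j, 0 < t j) (htlam : ∀ j, t j * lam j < 2) {x : κ → ι → ℝ} (hx : x ≠ 0) :
    weightedSqNorm π (mixBlocks W (gradStep A t x)) < weightedSqNorm π x := by
  by_contra! hle
  have hAx : ∀ j, A j *ᵥ x j = 0 := mulVec_eq_zero_of_weightedSqNorm_le_gradStep hπ hA hlam ht
    htlam (hle.trans (weightedSqNorm_mixBlocks_le hπ hW hcol heig _))
  have hgrad : gradStep A t x = x := funext fun j => by simp [gradStep, hAx j]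
  rw [hgrad] at hle
  have hdefect : mixingDefect W π x = 0 := by
    linarith [two_mul_weightedSqNorm_mixBlocks_add_mixingDefect (fun k => (hπ k).ne') hcol heig x,
      mixingDefect_nonneg hπ hW x]
  set u : κ → ι → ℝ := fun j => (π j)⁻¹ • x j
  have hu : ∀ a b, u a = u b := fun a b => by
    induction hconn a b with
    | refl => rfl
    | tail _ hbc ih =>
      refine ih.trans (funext fun i => ?_)
      simpa only [u, Pi.smul_apply, smul_eq_mul, inv_mul_eq_div] using
        div_eq_div_of_mixingDefect_eq_zero hπ hW hdefect hbc (hdiag _) i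
  obtain ⟨j₀, hj₀⟩ : ∃ j, x j ≠ 0 := by
    by_contra! h
    exact hx (funext h)
  have hu0 : u j₀ = 0 := hAsum.eq_zero_of_forall_mulVec_eq_zero fun j => by
    rw [← hu j j₀, Matrix.mulVec_smul, hAx j, smul_zero]
  exact hj₀ ((smul_eq_zero.1 hu0).resolve_left (inv_ne_zero (hπ j₀).ne'))

end DecentralizedGD

open DecentralizedGD in
theorem stmt_8_general {n d : ℕ}
    (A : Fin n → Matrix (Fin d) (Fin d) ℝ)
    (lam : Fin n → ℝ)
    (W : Matrix (Fin n) (Fin n) ℝ) (π : Fin n → ℝ) (α : ℝ)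
    (hA : ∀ j, (A j).PosSemidef)
    (hAsum : (∑ j, A j).PosDef)
    (hlam_max : ∀ j, ∀ μ ∈ spectrum ℝ (A j), μ ≤ lam j)
    (hW_nonneg : ∀ i j, 0 ≤ W i j)
    (hW_col : ∀ j, ∑ k, W k j = 1)
    (hW_diag : ∀ j, 0 < W j j)
    (hW_conn : ∀ i j : Fin n, Relation.ReflTransGen (fun a b => 0 < W b a) i j)
    (hπ_pos : ∀ k, 0 < π k)
    (hπ_eig : ∀ k, ∑ j, W k j * π j = π k)
    (hα0 : 0 < α) (hα : α < ⨅ k, 2 * n * π k / lam k) :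
    ∃ η : ℝ, η < 1 ∧
      ∀ x : Fin n → (Fin d → ℝ),
        Real.sqrt (∑ k, (1 / π k) *
            (∑ i, (∑ j, W k j * (x j i - (α / (n * π j)) * (A j).mulVec (x j) i)) ^ 2)) ≤
          η * Real.sqrt (∑ k, (1 / π k) * (∑ i, (x k i) ^ 2)) := by
  set t : Fin n → ℝ := fun j => α / (n * π j)
  have hnπ : ∀ j, (0 : ℝ) < n * π j := fun j => mul_pos (Nat.cast_pos.2 j.pos) (hπ_pos j)
  have ht : ∀ j, 0 < t j := fun j => div_pos hα0 (hnπ j)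
  have htlam : ∀ j, t j * lam j < 2 := fun j => div_mul_lt_two_of_lt_two_mul_div hα0 (hnπ j) <| by
    simpa only [mul_assoc] using hα.trans_le (ciInf_le (Finite.bddBelow_range _) j)
  obtain ⟨c, hc0, hc1, hc⟩ := exists_lt_one_forall_le_mul_of_lt
    (f := fun x => weightedSqNorm π (mixBlocks W (gradStep A t x)))
    ((continuous_weightedSqNorm π).comp ((continuous_mixBlocks W).comp (continuous_gradStep A t)))
    (continuous_weightedSqNorm π)
    (fun c x => by simp only [gradStep_smul, mixBlocks_smul, weightedSqNorm_smul])
    (weightedSqNorm_smul π) (fun _ hx => weightedSqNorm_pos hπ_pos hx)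
    (fun _ hx => weightedSqNorm_mixBlocks_gradStep_lt hπ_pos hW_nonneg hW_col hW_diag hW_conn
      hπ_eig hA hAsum hlam_max ht htlam hx)
  refine ⟨√c, (Real.sqrt_lt' one_pos).2 (by rwa [one_pow]), fun x => ?_⟩
  rw [← Real.sqrt_mul hc0]
  exact Real.sqrt_le_sqrt (hc x)

theorem stmt_8 {n d : ℕ} (hn : 0 < n)
    (A : Fin n → Matrix (Fin d) (Fin d) ℝ)
    (lam : Fin n → ℝ)
    (W : Matrix (Fin n) (Fin n) ℝ) (π : Fin n → ℝ) (α : ℝ)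
    (hA : ∀ j, (A j).PosSemidef)
    (hAsum : (∑ j, A j).PosDef)
    (hlam_mem : ∀ j, lam j ∈ spectrum ℝ (A j))
    (hlam_max : ∀ j, ∀ μ ∈ spectrum ℝ (A j), μ ≤ lam j)
    (hW_nonneg : ∀ i j, 0 ≤ W i j)
    (hW_col : ∀ j, ∑ k, W k j = 1)
    (hW_diag : ∀ j, 0 < W j j)
    (hW_conn : ∀ i j : Fin n, Relation.ReflTransGen (fun a b => 0 < W b a) i j)
    (hπ_pos : ∀ k, 0 < π k)
    (hπ_sum : ∑ k, π k = 1)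
    (hπ_eig : ∀ k, ∑ j, W k j * π j = π k)
    (hα0 : 0 < α) (hα : α < ⨅ k, 2 * n * π k / lam k) :
    ∃ η : ℝ, η < 1 ∧
      ∀ x : Fin n → (Fin d → ℝ),
        Real.sqrt (∑ k, (1 / π k) *
            (∑ i, (∑ j, W k j * (x j i - (α / (n * π j)) * (A j).mulVec (x j) i)) ^ 2)) ≤
          η * Real.sqrt (∑ k, (1 / π k) * (∑ i, (x k i) ^ 2)) :=
  stmt_8_general A lam W π α hA hAsum hlam_max hW_nonneg hW_col hW_diag hW_conn hπ_pos hπ_eig hα0 hα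
end

section
/- Suppose each fⱼ is L-smooth and there exist a > 0 and ρ ∈ (0,1) with |1/yⱼ(t) - 1/(nπⱼ)| ≤ aρᵗ for all j, t. Define P_t(w)ₖ = Σⱼ Wₖⱼ(∇fⱼ(wⱼ/(nπⱼ)) - ∇fⱼ(wⱼ/yⱼ(t))). Then ‖P_t(w)‖_{π⊗1_d} ≤ aLρᵗ‖w‖_{π⊗1_d} for all w ∈ (ℝ^d)^n and t ≥ 0. -/
set_option maxHeartbeats 1000000 in
theorem stmt_11 {n d : ℕ} (hn : 0 < n)
    (f : Fin n → EuclideanSpace ℝ (Fin d) → ℝ)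
    (L a ρ : ℝ) (W : Matrix (Fin n) (Fin n) ℝ) (π : Fin n → ℝ)
    (y : Fin n → ℕ → ℝ)
    (hL : 0 ≤ L) (ha : 0 < a) (hρ : ρ ∈ Set.Ioo (0 : ℝ) 1)
    (hdiff : ∀ j, Differentiable ℝ (f j))
    (hsm : ∀ j, LipschitzWith L.toNNReal (gradient (f j)))
    (hW_nonneg : ∀ i j, 0 ≤ W i j)
    (hW_col : ∀ j, ∑ k, W k j = 1)
    (hπ_pos : ∀ k, 0 < π k)
    (hπ_sum : ∑ k, π k = 1)
    (hπ_eig : ∀ k, ∑ j, W k j * π j = π k)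
    (hy_pos : ∀ j t, 0 < y j t)
    (hy : ∀ j t, |1 / y j t - 1 / (n * π j)| ≤ a * ρ ^ t) :
    ∀ (w : Fin n → EuclideanSpace ℝ (Fin d)) (t : ℕ),
      Real.sqrt (∑ k, (1 / π k) *
          ‖∑ j, W k j • (gradient (f j) ((1 / (n * π j)) • w j) -
              gradient (f j) ((1 / y j t) • w j))‖ ^ 2) ≤
        a * L * ρ ^ t * Real.sqrt (∑ k, (1 / π k) * ‖w k‖ ^ 2) := by
  intro w t
  obtain ⟨hρ0, hρ1⟩ := hρ
  set v : Fin n → EuclideanSpace ℝ (Fin d) := fun j =>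
    gradient (f j) ((1 / (n * π j)) • w j) - gradient (f j) ((1 / y j t) • w j) with hv_def
  set c : ℝ := a * L * ρ ^ t with hc_def
  have hc0 : 0 ≤ c := by positivity
  -- bound on each v j
  have hv : ∀ j, ‖v j‖ ≤ c * ‖w j‖ := by
    intro j
    have h1 := (hsm j).dist_le_mul ((1 / (n * π j)) • w j) ((1 / y j t) • w j)
    rw [dist_eq_norm, dist_eq_norm] at h1
    have h2 : (1 / (↑n * π j)) • w j - (1 / y j t) • w j
        = (1 / (↑n * π j) - 1 / y j t) • w j := by rw [sub_smul]
    rw [h2, norm_smul, Real.norm_eq_abs] at h1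
    have h3 : |1 / (↑n * π j) - 1 / y j t| ≤ a * ρ ^ t := by
      rw [abs_sub_comm]; exact hy j t
    have hLc : ((L.toNNReal : ℝ)) = L := Real.coe_toNNReal L hL
    calc ‖v j‖ ≤ (L.toNNReal : ℝ) * (|1 / (↑n * π j) - 1 / y j t| * ‖w j‖) := h1
      _ ≤ L * ((a * ρ ^ t) * ‖w j‖) := by
          rw [hLc]
          exact mul_le_mul_of_nonneg_left
            (mul_le_mul_of_nonneg_right h3 (norm_nonneg _)) hL
      _ = c * ‖w j‖ := by ring
  -- per-row Cauchy-Schwarz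
  have hrow : ∀ k, ‖∑ j, W k j • v j‖ ^ 2 ≤ π k * ∑ j, (W k j / π j) * ‖v j‖ ^ 2 := by
    intro k
    have h1 : ‖∑ j, W k j • v j‖ ≤ ∑ j, W k j * ‖v j‖ := by
      refine (norm_sum_le _ _).trans_eq ?_
      refine Finset.sum_congr rfl fun j _ => ?_
      rw [norm_smul, Real.norm_eq_abs, abs_of_nonneg (hW_nonneg k j)]
    have h2 : (∑ j, W k j * ‖v j‖) ^ 2 ≤
        (∑ j, W k j * π j) * ∑ j, (W k j / π j) * ‖v j‖ ^ 2 := by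
      have := Finset.sum_mul_sq_le_sq_mul_sq Finset.univ
        (fun j => Real.sqrt (W k j * π j))
        (fun j => Real.sqrt (W k j / π j) * ‖v j‖)
      have e1 : ∀ j : Fin n, Real.sqrt (W k j * π j) * (Real.sqrt (W k j / π j) * ‖v j‖)
          = W k j * ‖v j‖ := by
        intro j
        rw [← mul_assoc, ← Real.sqrt_mul (mul_nonneg (hW_nonneg k j) (hπ_pos j).le)]
        have : W k j * π j * (W k j / π j) = (W k j) ^ 2 := by
          field_simp [(hπ_pos j).ne']
        rw [this, Real.sqrt_sq (hW_nonneg k j)]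
      have e2 : ∀ j : Fin n, Real.sqrt (W k j * π j) ^ 2 = W k j * π j := by
        intro j; exact Real.sq_sqrt (mul_nonneg (hW_nonneg k j) (hπ_pos j).le)
      have e3 : ∀ j : Fin n, (Real.sqrt (W k j / π j) * ‖v j‖) ^ 2
          = (W k j / π j) * ‖v j‖ ^ 2 := by
        intro j
        rw [mul_pow, Real.sq_sqrt (div_nonneg (hW_nonneg k j) (hπ_pos j).le)]
      simpa only [e1, e2, e3] using this
    calc ‖∑ j, W k j • v j‖ ^ 2 ≤ (∑ j, W k j * ‖v j‖) ^ 2 := by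
          apply pow_le_pow_left₀ (norm_nonneg _) h1
      _ ≤ (∑ j, W k j * π j) * ∑ j, (W k j / π j) * ‖v j‖ ^ 2 := h2
      _ = π k * ∑ j, (W k j / π j) * ‖v j‖ ^ 2 := by rw [hπ_eig k]
  -- sum bound
  have hsum : (∑ k, (1 / π k) * ‖∑ j, W k j • v j‖ ^ 2)
      ≤ c ^ 2 * ∑ k, (1 / π k) * ‖w k‖ ^ 2 := by
    have step1 : (∑ k, (1 / π k) * ‖∑ j, W k j • v j‖ ^ 2)
        ≤ ∑ k, ∑ j, (W k j / π j) * ‖v j‖ ^ 2 := by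
      refine Finset.sum_le_sum fun k _ => ?_
      have h := mul_le_mul_of_nonneg_left (hrow k) (le_of_lt (one_div_pos.mpr (hπ_pos k)))
      calc (1 / π k) * ‖∑ j, W k j • v j‖ ^ 2
          ≤ (1 / π k) * (π k * ∑ j, (W k j / π j) * ‖v j‖ ^ 2) := h
        _ = ∑ j, (W k j / π j) * ‖v j‖ ^ 2 := by
            rw [← mul_assoc, one_div_mul_cancel (ne_of_gt (hπ_pos k)), one_mul]
    have step2 : (∑ k, ∑ j, (W k j / π j) * ‖v j‖ ^ 2)
        = ∑ j, (1 / π j) * ‖v j‖ ^ 2 := by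
      rw [Finset.sum_comm]
      refine Finset.sum_congr rfl fun j _ => ?_
      rw [← Finset.sum_mul]
      have : (∑ k, W k j / π j) = 1 / π j := by
        rw [← Finset.sum_div, hW_col j]
      rw [this]
    have step3 : (∑ j, (1 / π j) * ‖v j‖ ^ 2) ≤ c ^ 2 * ∑ k, (1 / π k) * ‖w k‖ ^ 2 := by
      rw [Finset.mul_sum]
      refine Finset.sum_le_sum fun j _ => ?_
      have h := hv j
      have : ‖v j‖ ^ 2 ≤ (c * ‖w j‖) ^ 2 := pow_le_pow_left₀ (norm_nonneg _) h 2
      calc (1 / π j) * ‖v j‖ ^ 2 ≤ (1 / π j) * (c * ‖w j‖) ^ 2 :=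
            mul_le_mul_of_nonneg_left this (le_of_lt (one_div_pos.mpr (hπ_pos j)))
        _ = c ^ 2 * ((1 / π j) * ‖w j‖ ^ 2) := by ring
    calc (∑ k, (1 / π k) * ‖∑ j, W k j • v j‖ ^ 2)
        ≤ ∑ k, ∑ j, (W k j / π j) * ‖v j‖ ^ 2 := step1
      _ = ∑ j, (1 / π j) * ‖v j‖ ^ 2 := step2
      _ ≤ c ^ 2 * ∑ k, (1 / π k) * ‖w k‖ ^ 2 := step3
  have := Real.sqrt_le_sqrt hsum
  rw [Real.sqrt_mul (by positivity) , Real.sqrt_sq hc0] at this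
  simpa only [hc_def, hv_def] using this
end

section
/- Suppose a sequence w(t) in a normed space satisfies ‖w(t+1) - w*‖ ≤ (1 - Cα + αbρᵗ)‖w(t) - w*‖ + αbRρᵗ for all t ≥ 0, with constants C, α, b, R > 0, ρ ∈ (0,1), 1 - Cα ∈ (0,1), and 1 - Cα ≠ ρ. Then for all t ≥ 0, ‖w(t+1) - w*‖ ≤ V_α(1-Cα)^{t+1}‖w(0) - w*‖ + (αbRV_α(1-Cα)/(1-Cα-ρ))((1-Cα)ᵗ - ρᵗ) + αbRρᵗ, where V_α = ∏_{j=0}^∞ (1 + αbρʲ/(1-Cα)). -/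
/-!
With `q = 1 - Cα`, the contraction factor `q + αbρᵗ` is `q (1 + αbρᵗ / q)`. Unrolling the
recursion (discrete Grönwall) leaves products of these factors, each at most `qⁿ V_α` because
the factors `1 + αbρʲ / q` are `≥ 1`, and the forcing terms sum to the geometric sum
`∑ ρᵏ q^(t-k) = q (qᵗ - ρᵗ) / (q - ρ)`. The last forcing term `αbRρᵗ` meets an empty product,
so it keeps no factor `V_α`.
-/

open Finset Filter

theorem Multipliable.prod_le_tprod_of_one_le {ι R : Type*} [CommMonoidWithZero R] [PartialOrder R]
    [ZeroLEOneClass R] [PosMulMono R] [TopologicalSpace R] [ClosedIciTopology R] {f : ι → R}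
    (hf : Multipliable f) (h : ∀ i, 1 ≤ f i) (s : Finset ι) : ∏ i ∈ s, f i ≤ ∏' i, f i :=
  ge_of_tendsto hf.hasProd <| eventually_atTop.2 ⟨s, fun _ hst ↦
    prod_le_prod_of_subset_of_one_le hst (fun i _ ↦ zero_le_one.trans (h i)) fun i _ _ ↦ h i⟩

theorem sum_range_pow_mul_pow_sub {K : Type*} [Field K] {x y : K} (hxy : x ≠ y) (n : ℕ) :
    ∑ k ∈ range n, y ^ k * x ^ (n - k) = x * ((x ^ n - y ^ n) / (x - y)) := by
  rw [← Commute.geom_sum₂ (Commute.all x y) hxy, geom_sum₂_comm, mul_sum]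
  refine sum_congr rfl fun k hk ↦ ?_
  rw [show n - k = n - 1 - k + 1 by grind, pow_succ]
  ring

section PerturbedContraction

variable {q c ρ V : ℝ}

theorem prod_Ico_add_mul_pow_le_pow_mul (hq : 0 < q)
    (hV : ∀ s : Finset ℕ, ∏ j ∈ s, (1 + c * ρ ^ j / q) ≤ V) (m n : ℕ) :
    ∏ i ∈ Ico m n, (q + c * ρ ^ i) ≤ q ^ (n - m) * V := by
  have hfactor : ∀ i, q + c * ρ ^ i = q * (1 + c * ρ ^ i / q) := fun i ↦ by field_simp
  simp_rw [hfactor, prod_mul_distrib, prod_const, Nat.card_Ico]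
  exact mul_le_mul_of_nonneg_left (hV _) (by positivity)

theorem perturbed_contraction_le {e : ℕ → ℝ} {K : ℝ} (hq : 0 < q) (hc : 0 ≤ c) (hρ : 0 ≤ ρ)
    (hqρ : q ≠ ρ) (hK : 0 ≤ K) (he0 : 0 ≤ e 0)
    (hV : ∀ s : Finset ℕ, ∏ j ∈ s, (1 + c * ρ ^ j / q) ≤ V)
    (hrec : ∀ t, e (t + 1) ≤ (q + c * ρ ^ t) * e t + K * ρ ^ t) (t : ℕ) :
    e (t + 1) ≤ V * q ^ (t + 1) * e 0 + (K * V * q / (q - ρ)) * (q ^ t - ρ ^ t) + K * ρ ^ t := by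
  have hunrolled := discrete_gronwall_prod_general (u := e) (c := fun i ↦ q + c * ρ ^ i)
    (b := fun k ↦ K * ρ ^ k) (fun n _ ↦ hrec n) (fun n _ ↦ by positivity) (Nat.zero_le (t + 1))
  simp only [← range_eq_Ico] at hunrolled
  rw [sum_range_succ, Ico_self, prod_empty, mul_one, ← add_assoc] at hunrolled
  have hterm : ∀ k ∈ range t, K * ρ ^ k * ∏ i ∈ Ico (k + 1) (t + 1), (q + c * ρ ^ i)
      ≤ K * V * (ρ ^ k * q ^ (t - k)) := fun k _ ↦ by
    calc K * ρ ^ k * ∏ i ∈ Ico (k + 1) (t + 1), (q + c * ρ ^ i)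
        ≤ K * ρ ^ k * (q ^ (t + 1 - (k + 1)) * V) :=
          mul_le_mul_of_nonneg_left (prod_Ico_add_mul_pow_le_pow_mul hq hV _ _) (by positivity)
      _ = K * V * (ρ ^ k * q ^ (t - k)) := by rw [Nat.add_sub_add_right]; ring
  calc e (t + 1)
      ≤ e 0 * ∏ i ∈ range (t + 1), (q + c * ρ ^ i) +
          ∑ k ∈ range t, K * ρ ^ k * ∏ i ∈ Ico (k + 1) (t + 1), (q + c * ρ ^ i) + K * ρ ^ t :=
        hunrolled
    _ ≤ e 0 * (q ^ (t + 1) * V) + ∑ k ∈ range t, K * V * (ρ ^ k * q ^ (t - k)) + K * ρ ^ t := by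
        have hprod := prod_Ico_add_mul_pow_le_pow_mul hq hV 0 (t + 1)
        rw [← range_eq_Ico, Nat.sub_zero] at hprod
        gcongr ?_ + ?_ + _
        · exact mul_le_mul_of_nonneg_left hprod he0
        · exact sum_le_sum hterm
    _ = V * q ^ (t + 1) * e 0 + (K * V * q / (q - ρ)) * (q ^ t - ρ ^ t) + K * ρ ^ t := by
        rw [← mul_sum, sum_range_pow_mul_pow_sub hqρ]
        ring

end PerturbedContraction

theorem stmt_14_general {X : Type*} [NormedAddCommGroup X] [NormedSpace ℝ X]
    (w : ℕ → X) (wstar : X) (C α b R ρ : ℝ)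
    (hα : 0 < α) (hb : 0 < b) (hR : 0 < R)
    (hρ : ρ ∈ Set.Ioo (0 : ℝ) 1)
    (h1 : 0 < 1 - C * α) (h3 : 1 - C * α ≠ ρ)
    (hrec : ∀ t : ℕ, ‖w (t + 1) - wstar‖ ≤
      (1 - C * α + α * b * ρ ^ t) * ‖w t - wstar‖ + α * b * R * ρ ^ t) :
    ∀ t : ℕ, ‖w (t + 1) - wstar‖ ≤
      (∏' j : ℕ, (1 + α * b * ρ ^ j / (1 - C * α))) * (1 - C * α) ^ (t + 1) *
          ‖w 0 - wstar‖ +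
        (α * b * R * (∏' j : ℕ, (1 + α * b * ρ ^ j / (1 - C * α))) * (1 - C * α) /
            (1 - C * α - ρ)) * ((1 - C * α) ^ t - ρ ^ t) +
        α * b * R * ρ ^ t := by
  obtain ⟨hρ0, hρ1⟩ := hρ
  have hmultipliable : Multipliable fun j : ℕ ↦ 1 + α * b * ρ ^ j / (1 - C * α) :=
    Real.multipliable_one_add_of_summable
      (((summable_geometric_of_lt_one hρ0.le hρ1).mul_left (α * b)).div_const _)
  exact perturbed_contraction_le (e := fun t ↦ ‖w t - wstar‖) (K := α * b * R) h1
    (by positivity) hρ0.le h3 (by positivity) (norm_nonneg _)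
    (hmultipliable.prod_le_tprod_of_one_le fun j ↦ le_add_of_nonneg_right (by positivity)) hrec

theorem stmt_14 {X : Type*} [NormedAddCommGroup X] [NormedSpace ℝ X]
    (w : ℕ → X) (wstar : X) (C α b R ρ : ℝ)
    (hC : 0 < C) (hα : 0 < α) (hb : 0 < b) (hR : 0 < R)
    (hρ : ρ ∈ Set.Ioo (0 : ℝ) 1)
    (h1 : 0 < 1 - C * α) (h2 : 1 - C * α < 1) (h3 : 1 - C * α ≠ ρ)
    (hrec : ∀ t : ℕ, ‖w (t + 1) - wstar‖ ≤
      (1 - C * α + α * b * ρ ^ t) * ‖w t - wstar‖ + α * b * R * ρ ^ t) :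
    ∀ t : ℕ, ‖w (t + 1) - wstar‖ ≤
      (∏' j : ℕ, (1 + α * b * ρ ^ j / (1 - C * α))) * (1 - C * α) ^ (t + 1) *
          ‖w 0 - wstar‖ +
        (α * b * R * (∏' j : ℕ, (1 + α * b * ρ ^ j / (1 - C * α))) * (1 - C * α) /
            (1 - C * α - ρ)) * ((1 - C * α) ^ t - ρ ^ t) +
        α * b * R * ρ ^ t :=
  stmt_14_general w wstar C α b R ρ hα hb hR hρ h1 h3 hrec
end

section
/- Let W be column stochastic with right eigenvector π (positive entries, sum 1), W^∞ = π1ₙᵀ, and ρ = |||W - W^∞|||_π < 1. Suppose w^α is a fixed point of T_α (defined by T_α(w)ₖ = ΣⱼWₖⱼ(wⱼ - α∇fⱼ(wⱼ/(nπⱼ)))). Then ‖w^α - (W^∞⊗I_d)w^α‖_{π⊗1_d} ≤ (αρ/(1-ρ))·‖∇F(w^α/(nπ))‖_{π⊗1_d}. -/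
/-!
Summing the fixed-point equation over the agents and using that `W` is column stochastic shows
`α • ∑ⱼ ∇fⱼ = 0`. Since moreover `(W - W^∞) W^∞ = 0`, the consensus error `y = w - W^∞ w` satisfies
`y = (W - W^∞)(y - α ∇F)`, so `‖y‖_π ≤ ρ (‖y‖_π + α ‖∇F‖_π)`, which rearranges to the claim.
-/

open Finset

section Consensus

variable {ι R E : Type*} [Fintype ι] [CommRing R] [AddCommGroup E] [Module R E]
  {W : Matrix ι ι R} {π : ι → R}

theorem sum_sum_smul_of_sum_col_eq_one (hW : ∀ j, ∑ k, W k j = 1) (x : ι → E) :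
    ∑ k, ∑ j, W k j • x j = ∑ j, x j := by
  rw [sum_comm]
  simp only [← sum_smul, hW, one_smul]

theorem smul_sum_eq_zero_of_eq_sum_smul_sub_smul (hW : ∀ j, ∑ k, W k j = 1) {w g : ι → E} {a : R}
    (hfix : ∀ k, w k = ∑ j, W k j • (w j - a • g j)) :
    a • ∑ j, g j = 0 := by
  have hsum := sum_sum_smul_of_sum_col_eq_one hW (fun j => w j - a • g j)
  rw [sum_congr rfl fun k _ => (hfix k).symm, sum_sub_distrib, ← smul_sum] at hsum
  exact sub_eq_self.mp hsum.symm

theorem sum_sub_mul_eq_zero (hπ_sum : ∑ k, π k = 1) (hπ_eig : ∀ k, ∑ j, W k j * π j = π k)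
    (k : ι) : ∑ j, (W k j - π k) * π j = 0 := by
  simp only [sub_mul, sum_sub_distrib, hπ_eig, ← mul_sum, hπ_sum, mul_one, sub_self]

theorem sum_sub_smul_sub_smul (hπ_sum : ∑ k, π k = 1) (hπ_eig : ∀ k, ∑ j, W k j * π j = π k)
    (x : ι → E) (S : E) (k : ι) :
    ∑ j, (W k j - π k) • (x j - π j • S) = ∑ j, (W k j - π k) • x j := by
  simp only [smul_sub, smul_smul, sum_sub_distrib, ← sum_smul,
    sum_sub_mul_eq_zero hπ_sum hπ_eig k, zero_smul, sub_zero]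

theorem sum_sub_smul_consensusError_of_eq_sum_smul_sub_smul (hW : ∀ j, ∑ k, W k j = 1)
    (hπ_sum : ∑ k, π k = 1) (hπ_eig : ∀ k, ∑ j, W k j * π j = π k) {w g : ι → E} {a : R}
    (hfix : ∀ k, w k = ∑ j, W k j • (w j - a • g j)) (k : ι) :
    ∑ j, (W k j - π k) • ((w j - π j • ∑ i, w i) - a • g j) = w k - π k • ∑ i, w i := by
  have hg := smul_sum_eq_zero_of_eq_sum_smul_sub_smul hW hfix
  calc ∑ j, (W k j - π k) • ((w j - π j • ∑ i, w i) - a • g j)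
      = ∑ j, (W k j - π k) • ((w j - a • g j) - π j • ∑ i, w i) :=
        sum_congr rfl fun j _ => by rw [sub_right_comm]
    _ = ∑ j, (W k j - π k) • (w j - a • g j) := sum_sub_smul_sub_smul hπ_sum hπ_eig _ _ k
    _ = w k - π k • ∑ i, w i := by
        rw [hfix k]
        simp only [sub_smul, sum_sub_distrib, ← smul_sum, hg, sub_zero]

end Consensus

section WeightedNorm

variable {ι E : Type*} [Fintype ι] [SeminormedAddCommGroup E] [NormedSpace ℝ E]

noncomputable def weightedNorm (π : ι → ℝ) (x : ι → E) : ℝ :=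
  √(∑ k, (1 / π k) * ‖x k‖ ^ 2)

theorem weightedNorm_eq_norm_toLp {π : ι → ℝ} (hπ : ∀ k, 0 ≤ π k) (x : ι → E) :
    weightedNorm π x = ‖WithLp.toLp 2 fun k => √(1 / π k) • x k‖ := by
  rw [PiLp.norm_eq_of_L2, weightedNorm]
  congr 1
  refine sum_congr rfl fun k _ => ?_
  rw [PiLp.toLp_apply, norm_smul, Real.norm_of_nonneg (Real.sqrt_nonneg _), mul_pow,
    Real.sq_sqrt (one_div_nonneg.mpr (hπ k))]

theorem weightedNorm_sub_smul_le {π : ι → ℝ} (hπ : ∀ k, 0 ≤ π k) (x g : ι → E) {a : ℝ}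
    (ha : 0 ≤ a) : weightedNorm π (x - a • g) ≤ weightedNorm π x + a * weightedNorm π g := by
  have hscale : (WithLp.toLp 2 fun k => √(1 / π k) • (x - a • g) k) =
      WithLp.toLp 2 (fun k => √(1 / π k) • x k) - a • WithLp.toLp 2 fun k => √(1 / π k) • g k := by
    ext k
    simp only [Pi.sub_apply, Pi.smul_apply, PiLp.sub_apply, PiLp.smul_apply, smul_sub, smul_comm a]
  rw [weightedNorm_eq_norm_toLp hπ, weightedNorm_eq_norm_toLp hπ, weightedNorm_eq_norm_toLp hπ,
    hscale]
  calc _ ≤ _ + ‖a • WithLp.toLp 2 fun k => √(1 / π k) • g k‖ := norm_sub_le _ _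
    _ = _ := by rw [norm_smul, Real.norm_of_nonneg ha]

end WeightedNorm

theorem stmt_19_general {n d : ℕ}
    (f : Fin n → EuclideanSpace ℝ (Fin d) → ℝ)
    (W : Matrix (Fin n) (Fin n) ℝ) (π : Fin n → ℝ) (ρ α : ℝ)
    (wα : Fin n → EuclideanSpace ℝ (Fin d))
    (hW_col : ∀ j, ∑ k, W k j = 1)
    (hπ_pos : ∀ k, 0 < π k)
    (hπ_sum : ∑ k, π k = 1)
    (hπ_eig : ∀ k, ∑ j, W k j * π j = π k)
    (hρ0 : 0 ≤ ρ) (hρ1 : ρ < 1)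
    (hρ_op : ∀ x : Fin n → EuclideanSpace ℝ (Fin d),
      Real.sqrt (∑ k, (1 / π k) * ‖∑ j, (W k j - π k) • x j‖ ^ 2) ≤
        ρ * Real.sqrt (∑ k, (1 / π k) * ‖x k‖ ^ 2))
    (hα : 0 < α)
    (hfix : ∀ k, wα k = ∑ j, W k j • (wα j - α • gradient (f j) ((1 / (n * π j)) • wα j))) :
    Real.sqrt (∑ k, (1 / π k) * ‖wα k - π k • ∑ j, wα j‖ ^ 2) ≤
      (α * ρ / (1 - ρ)) *
        Real.sqrt (∑ k, (1 / π k) * ‖gradient (f k) ((1 / (n * π k)) • wα k)‖ ^ 2) := by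
  set g : Fin n → EuclideanSpace ℝ (Fin d) := fun j => gradient (f j) ((1 / (n * π j)) • wα j)
  set y : Fin n → EuclideanSpace ℝ (Fin d) := fun k => wα k - π k • ∑ j, wα j
  have hy : ∀ k, ∑ j, (W k j - π k) • (y j - α • g j) = y k :=
    sum_sub_smul_consensusError_of_eq_sum_smul_sub_smul hW_col hπ_sum hπ_eig hfix
  have hcontract : weightedNorm π y ≤ ρ * weightedNorm π (y - α • g) := by
    simpa only [weightedNorm, Pi.sub_apply, Pi.smul_apply, hy] using hρ_op (y - α • g)
  have htri := weightedNorm_sub_smul_le (fun k => (hπ_pos k).le) y g hα.le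
  change weightedNorm π y ≤ α * ρ / (1 - ρ) * weightedNorm π g
  rw [div_mul_eq_mul_div, le_div_iff₀ (sub_pos.mpr hρ1)]
  linarith [mul_le_mul_of_nonneg_left htri hρ0]

theorem stmt_19 {n d : ℕ} (hn : 0 < n)
    (f : Fin n → EuclideanSpace ℝ (Fin d) → ℝ)
    (W : Matrix (Fin n) (Fin n) ℝ) (π : Fin n → ℝ) (ρ α : ℝ)
    (wα : Fin n → EuclideanSpace ℝ (Fin d))
    (hdiff : ∀ j, Differentiable ℝ (f j))
    (hW_nonneg : ∀ i j, 0 ≤ W i j)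
    (hW_col : ∀ j, ∑ k, W k j = 1)
    (hπ_pos : ∀ k, 0 < π k)
    (hπ_sum : ∑ k, π k = 1)
    (hπ_eig : ∀ k, ∑ j, W k j * π j = π k)
    (hρ0 : 0 ≤ ρ) (hρ1 : ρ < 1)
    (hρ_op : ∀ x : Fin n → EuclideanSpace ℝ (Fin d),
      Real.sqrt (∑ k, (1 / π k) * ‖∑ j, (W k j - π k) • x j‖ ^ 2) ≤
        ρ * Real.sqrt (∑ k, (1 / π k) * ‖x k‖ ^ 2))
    (hα : 0 < α)
    (hfix : ∀ k, wα k = ∑ j, W k j • (wα j - α • gradient (f j) ((1 / (n * π j)) • wα j))) :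
    Real.sqrt (∑ k, (1 / π k) * ‖wα k - π k • ∑ j, wα j‖ ^ 2) ≤
      (α * ρ / (1 - ρ)) *
        Real.sqrt (∑ k, (1 / π k) * ‖gradient (f k) ((1 / (n * π k)) • wα k)‖ ^ 2) :=
  stmt_19_general f W π ρ α wα hW_col hπ_pos hπ_sum hπ_eig hρ0 hρ1 hρ_op hα hfix
end
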